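/- arXiv:2311.03249 — 8 statements merged into one kernel-verified Lean document; each statement's English description precedes it below -/
import Mathlib

section
/- Let c be an edge-colouring of a clique K_k using exactly s' colours and let s be an integer with s > s'. Then for every positive integer n, h_{s+1}(n, c) ≥ h_s(n, c); that is, every homogeneous-set minimum over c-free (s+1)-edge-colourings of K_n is at least the corresponding minimum over c-free s-edge-colourings of K_n. -/
/-- A set `X` is homogeneous for an edge-colouring `c` of `K_n` with colours in `Fin s`
if some colour does not appear on pairs of distinct elements of `X`. -/
def IsHomog {n s : ℕ} (c : Sym2 (Fin n) → Fin s) (X : Finset (Fin n)) : Prop :=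
  ∃ i : Fin s, ∀ x ∈ X, ∀ y ∈ X, x ≠ y → c s(x, y) ≠ i

/-- `homNum c` is the maximum size of a homogeneous set of the colouring `c`. -/
noncomputable def homNum {n s : ℕ} (c : Sym2 (Fin n) → Fin s) : ℕ :=
  sSup {m | ∃ X : Finset (Fin n), IsHomog c X ∧ X.card = m}

/-- `c` contains a copy of the pattern `c'` (colours compared via their indices). -/
def HasCopy {n s k s' : ℕ} (c : Sym2 (Fin n) → Fin s) (c' : Sym2 (Fin k) → Fin s') : Prop :=
  ∃ φ : Fin k ↪ Fin n, ∀ x y : Fin k, x ≠ y →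
    ((c s(φ x, φ y) : ℕ) = (c' s(x, y) : ℕ))

/-- `hMin n s c'` is the minimum of `homNum c` over all `c'`-free
`s`-edge-colourings `c` of `K_n`. -/
noncomputable def hMin (n s : ℕ) {k s' : ℕ} (c' : Sym2 (Fin k) → Fin s') : ℕ :=
  sInf {m | ∃ c : Sym2 (Fin n) → Fin s, ¬ HasCopy c c' ∧ homNum c = m}

/-- The colouring `c'` uses all `s'` colours (on pairs of distinct vertices). -/
def UsesAllColours {k s' : ℕ} (c' : Sym2 (Fin k) → Fin s') : Prop :=
  ∀ i : Fin s', ∃ x y : Fin k, x ≠ y ∧ c' s(x, y) = i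

theorem stmt0 {k s' : ℕ} (c : Sym2 (Fin k) → Fin s') (hc : UsesAllColours c)
    (s : ℕ) (hs : s' < s) :
    ∀ n : ℕ, 0 < n → hMin n s c ≤ hMin n (s + 1) c := by
  intro n _
  have hs0 : 0 < s := lt_of_le_of_lt (Nat.zero_le _) hs
  set f : Fin (s + 1) → Fin s := fun j =>
    if h : (j : ℕ) < s then ⟨j, h⟩ else ⟨s - 1, by omega⟩ with hf
  -- key: the merged colouring is still c-free and its homNum is ≤
  have key : ∀ c₁ : Sym2 (Fin n) → Fin (s + 1), ¬ HasCopy c₁ c →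
      ¬ HasCopy (f ∘ c₁) c ∧ homNum (f ∘ c₁) ≤ homNum c₁ := by
    intro c₁ hfree
    constructor
    · rintro ⟨φ, hφ⟩
      apply hfree
      refine ⟨φ, fun x y hxy => ?_⟩
      have h := hφ x y hxy
      have hlt : ((c s(x, y) : ℕ)) < s' := (c s(x, y)).isLt
      simp only [Function.comp_apply, hf] at h
      by_cases h1 : ((c₁ s(φ x, φ y) : ℕ)) < s
      · simpa [h1] using h
      · simp only [h1, dif_neg, not_false_iff] at h
        omega
    · apply csSup_le_csSup
      · exact ⟨n, fun m hm => by
          obtain ⟨X, _, rfl⟩ := hm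
          simpa using Finset.card_le_card (Finset.subset_univ X)⟩
      · exact ⟨0, ⟨∅, ⟨⟨0, hs0⟩, by simp⟩, rfl⟩⟩
      · rintro m ⟨X, ⟨i, hi⟩, rfl⟩
        refine ⟨X, ⟨i.castSucc, fun x hx y hy hxy hc₁ => ?_⟩, rfl⟩
        apply hi x hx y hy hxy
        simp only [Function.comp_apply, hc₁, hf]
        have : ((i.castSucc : Fin (s+1)) : ℕ) < s := i.isLt
        simp [this]
  by_cases hS : ({m | ∃ c₁ : Sym2 (Fin n) → Fin (s + 1), ¬ HasCopy c₁ c ∧ homNum c₁ = m}).Nonempty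
  · apply le_csInf hS
    rintro m ⟨c₁, hfree, rfl⟩
    obtain ⟨hfree2, hle⟩ := key c₁ hfree
    calc hMin n s c ≤ homNum (f ∘ c₁) := Nat.sInf_le ⟨f ∘ c₁, hfree2, rfl⟩
      _ ≤ homNum c₁ := hle
  · -- the (s+1)-set is empty, hence so is the s-set
    rw [Set.not_nonempty_iff_eq_empty] at hS
    have hS' : {m | ∃ c₂ : Sym2 (Fin n) → Fin s, ¬ HasCopy c₂ c ∧ homNum c₂ = m} = ∅ := by
      rw [Set.eq_empty_iff_forall_notMem]
      rintro m ⟨c₂, hfree, rfl⟩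
      have : (homNum (Fin.castSucc ∘ c₂)) ∈
          {m | ∃ c₁ : Sym2 (Fin n) → Fin (s + 1), ¬ HasCopy c₁ c ∧ homNum c₁ = m} := by
        refine ⟨Fin.castSucc ∘ c₂, ?_, rfl⟩
        rintro ⟨φ, hφ⟩
        exact hfree ⟨φ, fun x y hxy => by simpa using hφ x y hxy⟩
      rw [hS] at this
      exact this
    unfold hMin
    rw [hS', hS]
end

section
/- Let c be an edge-colouring of a clique K_k using exactly s' colours and let s be an integer with s > s'. Then c has the EH-property for s colours if and only if c has the EH-property for s+1 colours. -/
/-- The pattern `c'` has the EH-property for `s` colours: there are constants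
`ε > 0` and `C > 0` such that `hMin n s c' ≥ C * n ^ ε` for all positive `n`. -/
def EHProp {k s' : ℕ} (s : ℕ) (c' : Sym2 (Fin k) → Fin s') : Prop :=
  ∃ ε : ℝ, 0 < ε ∧ ∃ C : ℝ, 0 < C ∧ ∀ n : ℕ, 1 ≤ n →
    C * (n : ℝ) ^ ε ≤ (hMin n s c' : ℝ)

lemma homNum_bdd {n s : ℕ} (c : Sym2 (Fin n) → Fin s) :
    BddAbove {m | ∃ X : Finset (Fin n), IsHomog c X ∧ X.card = m} := by
  refine ⟨n, fun m hm => ?_⟩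
  obtain ⟨X, _, rfl⟩ := hm
  simpa using Finset.card_le_card (Finset.subset_univ X)

lemma le_homNum {n s : ℕ} {c : Sym2 (Fin n) → Fin s} {X : Finset (Fin n)}
    (h : IsHomog c X) : X.card ≤ homNum c :=
  le_csSup (homNum_bdd c) ⟨X, h, rfl⟩

lemma homNum_le {n s B : ℕ} {c : Sym2 (Fin n) → Fin s} (hs : 0 < s)
    (h : ∀ X, IsHomog c X → X.card ≤ B) : homNum c ≤ B := by
  refine csSup_le ⟨0, ∅, ⟨⟨0, hs⟩, by simp⟩, by simp⟩ ?_
  rintro m ⟨X, hX, rfl⟩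
  exact h X hX

lemma one_le_homNum {n s : ℕ} (c : Sym2 (Fin n) → Fin s) (hn : 1 ≤ n) (hs : 0 < s) :
    1 ≤ homNum c := by
  have : IsHomog c {⟨0, hn⟩} := ⟨⟨0, hs⟩, by simp⟩
  simpa using le_homNum this

lemma homNum_le_card {n s : ℕ} (c : Sym2 (Fin n) → Fin s) (hs : 0 < s) : homNum c ≤ n :=
  homNum_le hs fun X _ => by simpa using Finset.card_le_card (Finset.subset_univ X)

lemma hasCopy_of_small {n s k s' : ℕ} (c : Sym2 (Fin n) → Fin s) (c' : Sym2 (Fin k) → Fin s')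
    (hk : k ≤ 1) (hn : 1 ≤ n) : HasCopy c c' := by
  refine ⟨⟨fun _ => ⟨0, hn⟩, fun a b _ => ?_⟩, fun x y hxy => absurd ?_ hxy⟩
  · exact Fin.ext (by omega)
  · exact Fin.ext (by omega)

lemma not_EHProp_of_small {k s' : ℕ} (c' : Sym2 (Fin k) → Fin s') (hk : k ≤ 1) (s : ℕ) :
    ¬ EHProp s c' := by
  rintro ⟨ε, hε, C, hC, h⟩
  have h1 := h 1 le_rfl
  have : hMin 1 s c' = 0 := by
    have : {m | ∃ c : Sym2 (Fin 1) → Fin s, ¬ HasCopy c c' ∧ homNum c = m} = ∅ := by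
      ext m
      simp only [Set.mem_setOf_eq, Set.mem_empty_iff_false, iff_false]
      rintro ⟨c, hfree, _⟩
      exact hfree (hasCopy_of_small c c' hk le_rfl)
    rw [hMin, this, Nat.sInf_empty]
  rw [this] at h1
  simp only [Nat.cast_one, Real.one_rpow, Nat.cast_zero, mul_one] at h1
  linarith

/-- merging colours s and s-1 -/
def mergeMap (s : ℕ) (hs : 0 < s) : Fin (s+1) → Fin s := fun i =>
  if h : (i : ℕ) < s then ⟨i, h⟩ else ⟨s-1, by omega⟩

lemma hMin_mono {n s k s' : ℕ} (c' : Sym2 (Fin k) → Fin s') (hk : 2 ≤ k) (hs : s' < s)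
    (hn : 1 ≤ n) : hMin n s c' ≤ hMin n (s+1) c' := by
  have hs'1 : 1 ≤ s' := (c' s(⟨0, by omega⟩, ⟨1, by omega⟩)).pos
  -- the constant colouring with colour s is c'-free
  have hne : {m | ∃ c : Sym2 (Fin n) → Fin (s+1), ¬ HasCopy c c' ∧ homNum c = m}.Nonempty := by
    refine ⟨homNum (fun _ => (⟨s, by omega⟩ : Fin (s+1))), fun _ => ⟨s, by omega⟩, ?_, rfl⟩
    rintro ⟨φ, hφ⟩
    have := hφ ⟨0, by omega⟩ ⟨1, by omega⟩ (by simp [Fin.ext_iff])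
    have hlt : (c' s(⟨0, by omega⟩, ⟨1, by omega⟩) : ℕ) < s' := Fin.is_lt _
    simp only at this
    omega
  obtain ⟨c₁, hfree₁, hhom₁⟩ := Nat.sInf_mem hne
  set c₂ : Sym2 (Fin n) → Fin s := fun e => mergeMap s (by omega) (c₁ e) with hc₂
  have hfree₂ : ¬ HasCopy c₂ c' := by
    rintro ⟨φ, hφ⟩
    refine hfree₁ ⟨φ, fun x y hxy => ?_⟩
    have h := hφ x y hxy
    have hlt : (c' s(x, y) : ℕ) < s' := Fin.is_lt _
    simp only [hc₂, mergeMap] at h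
    split at h
    · simp only [Fin.val_mk] at h; omega
    · simp only [Fin.val_mk] at h; omega
  have hle : homNum c₂ ≤ homNum c₁ := by
    refine homNum_le (by omega) fun X hX => ?_
    obtain ⟨j, hj⟩ := hX
    refine le_homNum (c := c₁) ?_
    by_cases hcase : (j : ℕ) = s - 1
    · refine ⟨⟨s, by omega⟩, fun x hx y hy hxy heq => ?_⟩
      refine hj x hx y hy hxy ?_
      have : (c₁ s(x,y) : ℕ) = s := by rw [heq]
      simp only [hc₂, mergeMap]
      rw [dif_neg (by omega)]
      exact Fin.ext (by simp only [Fin.val_mk]; omega)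
    · refine ⟨⟨j, by omega⟩, fun x hx y hy hxy heq => ?_⟩
      refine hj x hx y hy hxy ?_
      have hv : (c₁ s(x,y) : ℕ) = (j : ℕ) := by
        have := congrArg Fin.val heq; simpa using this
      have hjlt : (j : ℕ) < s := j.is_lt
      simp only [hc₂, mergeMap]
      rw [dif_pos (by omega)]
      exact Fin.ext (by simpa using hv)
  calc hMin n s c' ≤ homNum c₂ := Nat.sInf_le ⟨c₂, hfree₂, rfl⟩
    _ ≤ homNum c₁ := hle
    _ = hMin n (s+1) c' := hhom₁

lemma count_constrained {ι : Type*} [Fintype ι] [DecidableEq ι] {q : ℕ}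
    (t : Finset (Fin (q+1))) (S : Finset ι) :
    (Finset.univ.filter fun g : ι → Fin (q+1) => ∀ p ∈ S, g p ∈ t).card
      = t.card ^ S.card * (q+1) ^ (Fintype.card ι - S.card) := by
  classical
  have hset : (Finset.univ.filter fun g : ι → Fin (q+1) => ∀ p ∈ S, g p ∈ t)
      = Fintype.piFinset (fun p => if p ∈ S then t else Finset.univ) := by
    ext g
    simp only [Finset.mem_filter, Finset.mem_univ, true_and, Fintype.mem_piFinset]
    constructor
    · intro h p
      by_cases hp : p ∈ S <;> simp [hp, h p]
    · intro h p hp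
      have := h p
      simpa [hp] using this
  rw [hset, Fintype.card_piFinset]
  have h1 : ∀ p : ι, (if p ∈ S then t else (Finset.univ : Finset (Fin (q+1)))).card
      = if p ∈ S then t.card else q+1 := by
    intro p; split <;> simp
  rw [Finset.prod_congr rfl (fun p _ => h1 p)]
  rw [← Finset.prod_sdiff (Finset.subset_univ S)]
  have h2 : ∀ p ∈ Finset.univ \ S, (if p ∈ S then t.card else q+1) = q+1 := by
    intro p hp
    rw [Finset.mem_sdiff] at hp
    exact if_neg hp.2
  have h3 : ∀ p ∈ S, (if p ∈ S then t.card else q+1) = t.card := fun p hp => if_pos hp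
  rw [Finset.prod_congr rfl h2, Finset.prod_congr rfl h3, Finset.prod_const, Finset.prod_const]
  rw [Finset.card_sdiff_of_subset (Finset.subset_univ S)]
  simp [mul_comm]

lemma count_all_zero {ι : Type*} [Fintype ι] [DecidableEq ι] {q : ℕ} (S : Finset ι)
    (hS : S.card ≤ Fintype.card ι) :
    (Finset.univ.filter fun g : ι → Fin (q+1) => ∀ p ∈ S, g p = 0).card * (q+1) ^ S.card
      = (q+1) ^ (Fintype.card ι) := by
  classical
  have : (Finset.univ.filter fun g : ι → Fin (q+1) => ∀ p ∈ S, g p = 0)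
      = (Finset.univ.filter fun g : ι → Fin (q+1) =>
          ∀ p ∈ S, g p ∈ ({0} : Finset (Fin (q+1)))) := by
    apply Finset.filter_congr; intro g _
    simp
  rw [this, count_constrained]
  simp only [Finset.card_singleton, one_pow, one_mul]
  rw [← pow_add, Nat.sub_add_cancel hS]

lemma count_all_nonzero {ι : Type*} [Fintype ι] [DecidableEq ι] {q : ℕ}
    (S : Finset ι) (hS : S.card ≤ Fintype.card ι) :
    (Finset.univ.filter fun g : ι → Fin (q+1) => ∀ p ∈ S, g p ≠ 0).card * (q+1) ^ S.card
      = q ^ S.card * (q+1) ^ (Fintype.card ι) := by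
  classical
  have : (Finset.univ.filter fun g : ι → Fin (q+1) => ∀ p ∈ S, g p ≠ 0)
      = (Finset.univ.filter fun g : ι → Fin (q+1) =>
          ∀ p ∈ S, g p ∈ ({0} : Finset (Fin (q+1)))ᶜ) := by
    apply Finset.filter_congr; intro g _
    simp
  rw [this, count_constrained]
  rw [Finset.card_compl]
  simp only [Finset.card_singleton, Fintype.card_fin]
  rw [mul_assoc, ← pow_add, Nat.sub_add_cancel hS]
  simp

lemma two_mul_pow_le {r : ℕ} (hr : 1 ≤ r) : 2 * r ^ r ≤ (r + 1) ^ r := by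
  have hr0 : (0:ℝ) < (r:ℝ) := by exact_mod_cast hr
  have h := one_add_mul_le_pow (a := 1 / (r:ℝ)) (le_trans (by norm_num : (-2:ℝ) ≤ 0) (by positivity)) r
  have hrr : (r:ℝ) * (1/(r:ℝ)) = 1 := by field_simp
  have h2 : (2:ℝ) ≤ (1 + 1/(r:ℝ))^r := by
    calc (2:ℝ) = 1 + (r:ℝ) * (1/(r:ℝ)) := by rw [hrr]; norm_num
    _ ≤ _ := h
  have h3 : ((r:ℝ)+1)^r = (1+1/(r:ℝ))^r * (r:ℝ)^r := by
    rw [← mul_pow]; congr 1; field_simp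
  have hfin : 2 * (r:ℝ)^r ≤ ((r:ℝ)+1)^r := by
    rw [h3]
    have hp : (0:ℝ) ≤ (r:ℝ)^r := by positivity
    nlinarith
  exact_mod_cast hfin
open Finset

lemma double_count {n : ℕ} {X : Finset (Fin n)} {L m : ℕ} (hX : X.card = L) (hm : 1 ≤ m)
    (hL : m + 1 ≤ L) (P : Finset (Fin n) → Prop) [DecidablePred P]
    (h : ∀ Y ∈ Finset.powersetCard (m+1) X, ∃ p ∈ Finset.powersetCard 2 Y, P p) :
    Nat.choose L (m+1) ≤ Nat.choose (L-2) (m-1) * ((Finset.powersetCard 2 X).filter P).card := by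
  classical
  set t := (Finset.powersetCard 2 X).filter P with ht
  have key := Finset.card_le_mul_card_image_of_maps_to
    (f := fun Y => if hY : Y ∈ Finset.powersetCard (m+1) X then (h Y hY).choose else ∅)
    (s := Finset.powersetCard (m+1) X) (t := t) ?_ (Nat.choose (L-2) (m-1)) ?_
  · rwa [Finset.card_powersetCard, hX] at key
  · intro Y hY
    simp only [dif_pos hY]
    obtain ⟨hp, hP⟩ := (h Y hY).choose_spec
    rw [ht, Finset.mem_filter]
    refine ⟨?_, hP⟩
    have hYX : Y ⊆ X := (Finset.mem_powersetCard.1 hY).1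
    exact Finset.powersetCard_mono hYX hp
  · intro p hp
    rw [ht, Finset.mem_filter, Finset.mem_powersetCard] at hp
    obtain ⟨⟨hpX, hp2⟩, _⟩ := hp
    have hsub : (Finset.powersetCard (m+1) X).filter
        (fun Y => (if hY : Y ∈ Finset.powersetCard (m+1) X then (h Y hY).choose else ∅) = p)
        ⊆ (Finset.powersetCard (m+1) X).filter (fun Y => p ⊆ Y) := by
      intro Y hY
      rw [Finset.mem_filter] at hY ⊢
      obtain ⟨hY1, hY2⟩ := hY
      refine ⟨hY1, ?_⟩
      rw [dif_pos hY1] at hY2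
      obtain ⟨hmem, _⟩ := (h Y hY1).choose_spec
      rw [hY2] at hmem
      exact (Finset.mem_powersetCard.1 hmem).1
    refine le_trans (Finset.card_le_card hsub) ?_
    have hinj : Set.InjOn (fun Y => Y \ p)
        ((Finset.powersetCard (m+1) X).filter (fun Y => p ⊆ Y)) := by
      intro Y1 h1 Y2 h2 heq
      simp only [Finset.coe_filter, Set.mem_setOf_eq] at h1 h2
      have e1 : Y1 \ p ∪ p = Y1 := Finset.sdiff_union_of_subset h1.2
      have e2 : Y2 \ p ∪ p = Y2 := Finset.sdiff_union_of_subset h2.2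
      simp only at heq
      rw [← e1, ← e2, heq]
    have hmaps : ∀ Y ∈ (Finset.powersetCard (m+1) X).filter (fun Y => p ⊆ Y),
        Y \ p ∈ Finset.powersetCard (m-1) (X \ p) := by
      intro Y hY
      rw [Finset.mem_filter, Finset.mem_powersetCard] at hY
      obtain ⟨⟨hYX, hYcard⟩, hpY⟩ := hY
      rw [Finset.mem_powersetCard]
      constructor
      · exact Finset.sdiff_subset_sdiff hYX le_rfl
      · rw [Finset.card_sdiff_of_subset hpY, hYcard, hp2]; omega
    refine le_trans (Finset.card_le_card_of_injOn _ hmaps hinj) ?_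
    rw [Finset.card_powersetCard, Finset.card_sdiff_of_subset hpX, hX, hp2]
lemma arith2 {n ℓ L : ℕ} (hn : n < 2^(ℓ+1)) (hL : 1 ≤ L) :
    2 * n.choose L * ((L.choose 2).choose (L*(ℓ+2))) < (4*L^2+1)^(L*(ℓ+2)) := by
  set T := L*(ℓ+2) with hT
  have hM : L.choose 2 ≤ L^2 := le_trans (Nat.choose_le_pow L 2) (by nlinarith)
  have h1 : (L.choose 2).choose T ≤ (L^2)^T :=
    le_trans (Nat.choose_le_pow _ T) (Nat.pow_le_pow_left hM T)
  have h2 : n.choose L ≤ n^L := Nat.choose_le_pow n L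
  have h4 : n^L < 2^((ℓ+1)*L) := by
    calc n^L < (2^(ℓ+1))^L := Nat.pow_lt_pow_left hn (by omega)
    _ = 2^((ℓ+1)*L) := by rw [← pow_mul]
  have h5 : (ℓ+1)*L + 1 ≤ 2*T := by
    rw [hT]; nlinarith
  calc 2 * n.choose L * ((L.choose 2).choose T)
      ≤ 2 * n^L * (L^2)^T := by
        exact Nat.mul_le_mul (Nat.mul_le_mul_left 2 h2) h1
    _ < 2 * 2^((ℓ+1)*L) * (L^2)^T := by
        have hpos : 0 < (L^2)^T := by positivity
        have : 2 * n^L < 2 * 2^((ℓ+1)*L) := by omega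
        exact Nat.mul_lt_mul_of_lt_of_le this le_rfl hpos
    _ = 2^((ℓ+1)*L + 1) * (L^2)^T := by ring
    _ ≤ 2^(2*T) * (L^2)^T := by
        exact Nat.mul_le_mul_right _ (Nat.pow_le_pow_right (by norm_num) h5)
    _ = (4*L^2)^T := by rw [pow_mul]; rw [← mul_pow]; norm_num
    _ ≤ (4*L^2+1)^T := Nat.pow_le_pow_left (by omega) T

lemma arith1 {n ℓ q : ℕ} (hn : n < 2^(ℓ+1)) (hq : 1 ≤ q) :
    2 * n.choose (2*(q+1)*(ℓ+2)+2) * q^((2*(q+1)*(ℓ+2)+2).choose 2)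
      < (q+1)^((2*(q+1)*(ℓ+2)+2).choose 2) := by
  set A := 2*(q+1)*(ℓ+2)+2 with hA
  set B := A.choose 2 with hB
  set u := A*(ℓ+1)+1 with hu
  have hA1 : 1 ≤ A := by omega
  have s1 : 2*q^q ≤ (q+1)^q := two_mul_pow_le hq
  have s3 : q*u ≤ B := by
    rw [hB, Nat.choose_two_right]
    rw [Nat.le_div_iff_mul_le (by norm_num)]
    have e1 : A*(ℓ+1)+1 ≤ A*(ℓ+2) := by nlinarith
    calc q*u*2 ≤ q*(A*(ℓ+2))*2 := by
          have := Nat.mul_le_mul_left q e1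
          rw [hu]; nlinarith
      _ ≤ A * (A-1) := by
          have : A - 1 = 2*(q+1)*(ℓ+2)+1 := by omega
          rw [this]; nlinarith
  have s4 : 2^u * q^B ≤ (q+1)^B := by
    have hsplit : B = q*u + (B - q*u) := by omega
    calc 2^u * q^B = 2^u * q^(q*u) * q^(B - q*u) := by
          rw [mul_assoc, ← pow_add, ← hsplit]
      _ = (2*q^q)^u * q^(B - q*u) := by
          rw [mul_pow, ← pow_mul, mul_comm q u, mul_comm u q]
      _ ≤ ((q+1)^q)^u * (q+1)^(B - q*u) := by
          exact Nat.mul_le_mul (Nat.pow_le_pow_left s1 u)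
            (Nat.pow_le_pow_left (by omega) _)
      _ = (q+1)^(q*u) * (q+1)^(B-q*u) := by rw [← pow_mul]
      _ = (q+1)^B := by rw [← pow_add, ← hsplit]
  have s5 : 2 * n^A < 2^u := by
    have h4 : n^A < 2^((ℓ+1)*A) := by
      calc n^A < (2^(ℓ+1))^A := Nat.pow_lt_pow_left hn (by omega)
      _ = 2^((ℓ+1)*A) := by rw [← pow_mul]
    have : 2^u = 2 * 2^((ℓ+1)*A) := by
      rw [hu, mul_comm A (ℓ+1)]; ring
    omega
  calc 2 * n.choose A * q^B ≤ 2 * n^A * q^B :=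
        Nat.mul_le_mul_right _ (Nat.mul_le_mul_left 2 (Nat.choose_le_pow n A))
    _ < 2^u * q^B := by
        have hpos : 0 < q^B := by positivity
        exact Nat.mul_lt_mul_of_lt_of_le s5 le_rfl hpos
    _ ≤ (q+1)^B := s4


open Finset in
lemma union_mul_bound {α ι' : Type*} [DecidableEq α] (P : Finset ι') (F : ι' → Finset α)
    (bad : Finset α) (hsub : bad ⊆ P.biUnion F) (W c : ℕ)
    (hW : ∀ X ∈ P, (F X).card * W ≤ c) : bad.card * W ≤ P.card * c := by
  calc bad.card * W ≤ (∑ X ∈ P, (F X).card) * W :=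
        Nat.mul_le_mul_right _ (le_trans (card_le_card hsub) (card_biUnion_le))
    _ = ∑ X ∈ P, (F X).card * W := Finset.sum_mul _ _ _
    _ ≤ ∑ _X ∈ P, c := Finset.sum_le_sum hW
    _ = P.card * c := by rw [Finset.sum_const, smul_eq_mul]

lemma cancel_lt {a b w : ℕ} (hw : 0 < w) (h : a * w < b * w) : a < b :=
  lt_of_mul_lt_mul_right h (Nat.zero_le w)

lemma key_bound {k s' : ℕ} (c' : Sym2 (Fin k) → Fin s') (hk : 2 ≤ k) {s : ℕ} (hs : s' < s)
    {n : ℕ} (hn : 1 ≤ n) :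
    hMin n (s+1) c' ≤ 200 * (hMin n s c')^4 * (Nat.log 2 n + 2)^3 := by
  classical
  have hs'1 : 1 ≤ s' := (c' s(⟨0, by omega⟩, ⟨1, by omega⟩)).pos
  have hspos : 0 < s := by omega
  have hSne : {m | ∃ c₀ : Sym2 (Fin n) → Fin s, ¬ HasCopy c₀ c' ∧ homNum c₀ = m}.Nonempty := by
    refine ⟨homNum (fun _ => (⟨s-1, by omega⟩ : Fin s)), fun _ => ⟨s-1, by omega⟩, ?_, rfl⟩
    rintro ⟨φ, hφ⟩
    have h := hφ ⟨0, by omega⟩ ⟨1, by omega⟩ (by simp [Fin.ext_iff])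
    have hlt : (c' s(⟨0, by omega⟩, ⟨1, by omega⟩) : ℕ) < s' := Fin.is_lt _
    simp only [Fin.val_mk] at h
    omega
  obtain ⟨c₀, hfree₀, hhom₀⟩ := Nat.sInf_mem hSne
  set m := hMin n s c' with hmdef
  have hm0 : homNum c₀ = m := hhom₀
  have hm1 : 1 ≤ m := by
    rw [← hm0]
    exact one_le_homNum c₀ hn hspos
  set ℓ := Nat.log 2 n with hℓ
  have hnlog : n < 2^(ℓ+1) := Nat.lt_pow_succ_log_self (by norm_num) n
  clear_value m
  clear hmdef hhom₀ hSne
  obtain ⟨L, hLdef⟩ : ∃ L, L = m*(m+1)*(ℓ+2)+2 := ⟨_, rfl⟩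
  obtain ⟨Q, hQdef⟩ : ∃ Q, Q = 4*L^2 := ⟨_, rfl⟩
  obtain ⟨A, hAdef⟩ : ∃ A, A = 2*(Q+1)*(ℓ+2)+2 := ⟨_, rfl⟩
  obtain ⟨T, hTdef⟩ : ∃ T, T = L*(ℓ+2) := ⟨_, rfl⟩
  obtain ⟨D, hDdef⟩ : ∃ D, D = Fintype.card (Finset (Fin n)) := ⟨_, rfl⟩
  have hL1 : 1 ≤ L := by omega
  have hQ1 : 1 ≤ Q := by
    have : 1 ≤ L^2 := Nat.one_le_pow _ _ (by omega)
    omega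
  have hmL : m + 1 ≤ L := by
    have : m*1*1 ≤ m*(m+1)*(ℓ+2) :=
      Nat.mul_le_mul (Nat.mul_le_mul_left m (by omega)) (by omega)
    omega
  set badA := (Finset.univ.filter fun g : Finset (Fin n) → Fin (Q+1) =>
    ∃ X ∈ Finset.powersetCard A (Finset.univ : Finset (Fin n)),
      ∀ p ∈ Finset.powersetCard 2 X, g p ≠ 0) with hbadA
  set badB := (Finset.univ.filter fun g : Finset (Fin n) → Fin (Q+1) =>
    ∃ X ∈ Finset.powersetCard L (Finset.univ : Finset (Fin n)),
      T ≤ ((Finset.powersetCard 2 X).filter (fun p => g p = 0)).card) with hbadB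
  -- bound on badA
  have hA2 : 2*badA.card < (Q+1)^D := by
    have hb : badA.card * (Q+1)^(A.choose 2)
        ≤ (n.choose A) * (Q^(A.choose 2) * (Q+1)^D) := by
      have := union_mul_bound (Finset.powersetCard A (Finset.univ : Finset (Fin n)))
        (fun X => Finset.univ.filter fun g : Finset (Fin n) → Fin (Q+1) =>
          ∀ p ∈ Finset.powersetCard 2 X, g p ≠ 0) badA ?_ ((Q+1)^(A.choose 2))
        (Q^(A.choose 2) * (Q+1)^D) ?_
      · rwa [Finset.card_powersetCard, Finset.card_univ, Fintype.card_fin] at this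
      · intro g hg
        rw [hbadA, Finset.mem_filter] at hg
        obtain ⟨-, X, hX, hind⟩ := hg
        rw [Finset.mem_biUnion]
        exact ⟨X, hX, by simpa using hind⟩
      · intro X hX
        obtain ⟨-, hXcard⟩ := Finset.mem_powersetCard.1 hX
        have hpc : (Finset.powersetCard 2 X).card = A.choose 2 := by
          rw [Finset.card_powersetCard, hXcard]
        have hcount := count_all_nonzero (q := Q) (Finset.powersetCard 2 X)
          (Finset.card_le_univ _)
        rw [hpc, ← hDdef] at hcount
        exact le_of_eq hcount
    have harith := arith1 (q := Q) hnlog hQ1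
    rw [← hAdef] at harith
    refine cancel_lt (w := (Q+1)^(A.choose 2)) (Nat.pow_pos (by omega)) ?_
    calc 2*badA.card * (Q+1)^(A.choose 2)
        = 2*(badA.card * (Q+1)^(A.choose 2)) := by ring
      _ ≤ 2*((n.choose A) * (Q^(A.choose 2) * (Q+1)^D)) := Nat.mul_le_mul_left 2 hb
      _ = (2 * n.choose A * Q^(A.choose 2)) * (Q+1)^D := by ring
      _ < (Q+1)^(A.choose 2) * (Q+1)^D :=
          Nat.mul_lt_mul_of_lt_of_le harith le_rfl (Nat.pow_pos (by omega))
      _ = (Q+1)^D * (Q+1)^(A.choose 2) := by ring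
  -- bound on badB
  have hB2 : 2*badB.card < (Q+1)^D := by
    have hb : badB.card * (Q+1)^T
        ≤ (n.choose L) * ((L.choose 2).choose T * (Q+1)^D) := by
      have := union_mul_bound (Finset.powersetCard L (Finset.univ : Finset (Fin n)))
        (fun X => Finset.univ.filter fun g : Finset (Fin n) → Fin (Q+1) =>
          T ≤ ((Finset.powersetCard 2 X).filter (fun p => g p = 0)).card) badB ?_
        ((Q+1)^T) ((L.choose 2).choose T * (Q+1)^D) ?_
      · rwa [Finset.card_powersetCard, Finset.card_univ, Fintype.card_fin] at this
      · intro g hg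
        rw [hbadB, Finset.mem_filter] at hg
        obtain ⟨-, X, hX, hind⟩ := hg
        rw [Finset.mem_biUnion]
        exact ⟨X, hX, by simpa using hind⟩
      · intro X hX
        obtain ⟨-, hXcard⟩ := Finset.mem_powersetCard.1 hX
        have hpc : (Finset.powersetCard 2 X).card = L.choose 2 := by
          rw [Finset.card_powersetCard, hXcard]
        have hinner := union_mul_bound
          (Finset.powersetCard T (Finset.powersetCard 2 X))
          (fun S => Finset.univ.filter fun g : Finset (Fin n) → Fin (Q+1) =>
            ∀ p ∈ S, g p = 0)
          (Finset.univ.filter fun g : Finset (Fin n) → Fin (Q+1) =>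
            T ≤ ((Finset.powersetCard 2 X).filter (fun p => g p = 0)).card) ?_
          ((Q+1)^T) ((Q+1)^D) ?_
        · rw [Finset.card_powersetCard, hpc] at hinner
          exact hinner
        · intro g hg
          rw [Finset.mem_filter] at hg
          obtain ⟨-, hcard⟩ := hg
          obtain ⟨S, hSsub, hScard⟩ := Finset.exists_subset_card_eq hcard
          rw [Finset.mem_biUnion]
          refine ⟨S, ?_, ?_⟩
          · rw [Finset.mem_powersetCard]
            exact ⟨le_trans hSsub (Finset.filter_subset _ _), hScard⟩
          · simp only [Finset.mem_filter, Finset.mem_univ, true_and]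
            intro p hp
            exact (Finset.mem_filter.1 (hSsub hp)).2
        · intro S hS
          obtain ⟨-, hScard⟩ := Finset.mem_powersetCard.1 hS
          have hcount := count_all_zero (q := Q) S (Finset.card_le_univ _)
          rw [hScard, ← hDdef] at hcount
          exact le_of_eq hcount
    have harith := arith2 (ℓ := ℓ) (L := L) hnlog hL1
    rw [← hTdef, ← hQdef] at harith
    refine cancel_lt (w := (Q+1)^T) (Nat.pow_pos (by omega)) ?_
    calc 2*badB.card * (Q+1)^T
        = 2*(badB.card * (Q+1)^T) := by ring
      _ ≤ 2*((n.choose L) * ((L.choose 2).choose T * (Q+1)^D)) := Nat.mul_le_mul_left 2 hb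
      _ = (2 * n.choose L * (L.choose 2).choose T) * (Q+1)^D := by ring
      _ < (Q+1)^T * (Q+1)^D :=
          Nat.mul_lt_mul_of_lt_of_le harith le_rfl (Nat.pow_pos (by omega))
      _ = (Q+1)^D * (Q+1)^T := by ring
  -- a good g exists
  have hgood : ∃ g : Finset (Fin n) → Fin (Q+1), g ∉ badA ∧ g ∉ badB := by
    by_contra hcon
    push_neg at hcon
    have huniv : (Finset.univ : Finset (Finset (Fin n) → Fin (Q+1))) ⊆ badA ∪ badB := by
      intro g _
      rcases Classical.em (g ∈ badA) with h | h
      · exact Finset.mem_union_left _ h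
      · exact Finset.mem_union_right _ (hcon g h)
    have hcard := Finset.card_le_card huniv
    rw [Finset.card_univ, Fintype.card_fun, Fintype.card_fin, ← hDdef] at hcard
    have := Finset.card_union_le badA badB
    omega
  obtain ⟨g, hgA, hgB⟩ := hgood
  rw [hbadA, Finset.mem_filter] at hgA
  rw [hbadB, Finset.mem_filter] at hgB
  push_neg at hgA hgB
  have hgA' := hgA (Finset.mem_univ g)
  have hgB' := hgB (Finset.mem_univ g)
  -- the recoloured colouring
  have hslt : s < s + 1 := by omega
  set f : Fin n → Fin n → Fin (s+1) := fun a b =>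
    if g {a,b} = 0 then (⟨s, hslt⟩ : Fin (s+1)) else (c₀ s(a,b)).castSucc with hf
  have hfsymm : ∀ a b, f a b = f b a := by
    intro a b
    simp only [hf]
    rw [Finset.pair_comm, Sym2.eq_swap]
  set c₁ : Sym2 (Fin n) → Fin (s+1) := Sym2.lift ⟨f, hfsymm⟩ with hc₁
  have hc₁ab : ∀ a b : Fin n, c₁ s(a,b) = f a b := fun a b => by rw [hc₁]; rfl
  have hfree₁ : ¬ HasCopy c₁ c' := by
    rintro ⟨φ, hφ⟩
    refine hfree₀ ⟨φ, fun x y hxy => ?_⟩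
    have h := hφ x y hxy
    have hlt : (c' s(x, y) : ℕ) < s' := Fin.is_lt _
    rw [hc₁ab, hf] at h
    simp only at h
    split at h
    · simp only [Fin.val_mk] at h; omega
    · rwa [Fin.coe_castSucc] at h
  -- bounding homogeneous sets of c₁
  have hhomb : homNum c₁ ≤ A + L := by
    refine homNum_le (by omega) fun X hX => ?_
    by_contra hbig
    push_neg at hbig
    obtain ⟨i, hi⟩ := hX
    by_cases hcase : (i:ℕ) = s
    · -- colour s missing on X : all pairs of X are g-independent
      obtain ⟨X'', hX''sub, hX''card⟩ :=
        Finset.exists_subset_card_eq (s := X) (n := A) (by omega)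
      obtain ⟨p, hp, heq0⟩ :=
        hgA' X'' (Finset.mem_powersetCard.2 ⟨Finset.subset_univ _, hX''card⟩)
      obtain ⟨hpsub, hpcard⟩ := Finset.mem_powersetCard.1 hp
      obtain ⟨x, y, hxy, rfl⟩ := Finset.card_eq_two.1 hpcard
      have hx : x ∈ X := hX''sub (hpsub (by simp))
      have hy : y ∈ X := hX''sub (hpsub (by simp))
      refine hi x hx y hy hxy ?_
      rw [hc₁ab, hf]
      simp only
      rw [if_pos heq0]
      exact Fin.ext (by simp only [Fin.val_mk]; omega)
    · -- colour i < s is missing on X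
      have hilt : (i:ℕ) < s := by have := i.is_lt; omega
      obtain ⟨X', hX'sub, hX'card⟩ :=
        Finset.exists_subset_card_eq (s := X) (n := L) (by omega)
      have hltT := hgB' X' (Finset.mem_powersetCard.2 ⟨Finset.subset_univ _, hX'card⟩)
      have hev : ∀ Y ∈ Finset.powersetCard (m+1) X',
          ∃ p ∈ Finset.powersetCard 2 Y, g p = 0 := by
        intro Y hY
        by_contra hno
        push_neg at hno
        obtain ⟨hYsub, hYcard⟩ := Finset.mem_powersetCard.1 hY
        have hYhom : IsHomog c₀ Y := by
          refine ⟨⟨i, hilt⟩, fun x hx y hy hxy heq => ?_⟩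
          have hpmem : ({x,y} : Finset (Fin n)) ∈ Finset.powersetCard 2 Y := by
            refine Finset.mem_powersetCard.2 ⟨?_, Finset.card_pair hxy⟩
            intro z hz
            simp only [Finset.mem_insert, Finset.mem_singleton] at hz
            rcases hz with rfl | rfl
            · exact hx
            · exact hy
          have hne := hno _ hpmem
          have hxX : x ∈ X := hX'sub (hYsub hx)
          have hyX : y ∈ X := hX'sub (hYsub hy)
          refine hi x hxX y hyX hxy ?_
          rw [hc₁ab, hf]
          simp only
          rw [if_neg hne]
          exact Fin.ext (by simp [heq])
        have := le_homNum hYhom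
        rw [hm0, hYcard] at this
        omega
      have hdc := double_count hX'card hm1 hmL (fun p => g p = 0) hev
      set cc := ((Finset.powersetCard 2 X').filter (fun p => g p = 0)).card with hcc
      have hid1 : L * ((L-1) * Nat.choose (L-2) (m-1)) = L.choose (m+1) * (m+1) * m := by
        have e1 : L.choose (m+1) * (m+1) = L * (L-1).choose m := by
          have := Nat.add_one_mul_choose_eq (L-1) m
          have hL' : L - 1 + 1 = L := by omega
          rw [hL'] at this
          omega
        have e2 : (L-1).choose m * m = (L-1) * (L-2).choose (m-1) := by
          have := Nat.add_one_mul_choose_eq (L-2) (m-1)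
          have hL' : L - 2 + 1 = L - 1 := by omega
          have hm' : m - 1 + 1 = m := by omega
          rw [hL', hm'] at this
          omega
        calc L * ((L-1) * Nat.choose (L-2) (m-1)) = L * ((L-1).choose m * m) := by rw [← e2]
          _ = (L * (L-1).choose m) * m := by ring
          _ = (L.choose (m+1) * (m+1)) * m := by rw [← e1]
          _ = L.choose (m+1) * (m+1) * m := by ring
      have hchoosepos : 0 < Nat.choose (L-2) (m-1) := Nat.choose_pos (by omega)
      have hineq : L * (L-1) ≤ cc * ((m+1) * m) := by
        have h1 : L.choose (m+1) * (m+1) * m ≤ (L-2).choose (m-1) * cc * ((m+1)*m) := by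
          have h0 := Nat.mul_le_mul_right ((m+1)*m) hdc
          calc L.choose (m+1) * (m+1) * m = L.choose (m+1) * ((m+1)*m) := by ring
            _ ≤ (L-2).choose (m-1) * cc * ((m+1)*m) := h0
        have h2 : (L-2).choose (m-1) * (L * (L-1)) ≤ (L-2).choose (m-1) * (cc * ((m+1)*m)) := by
          calc (L-2).choose (m-1) * (L * (L-1)) = L * ((L-1) * (L-2).choose (m-1)) := by ring
            _ = L.choose (m+1) * (m+1) * m := hid1
            _ ≤ (L-2).choose (m-1) * cc * ((m+1)*m) := h1
            _ = (L-2).choose (m-1) * (cc * ((m+1)*m)) := by ring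
        exact Nat.le_of_mul_le_mul_left h2 hchoosepos
      have hT1 : T * ((m+1)*m) ≤ L * (L-1) := by
        have hstep : (m*(m+1))*(ℓ+2) ≤ L - 1 := by omega
        calc T * ((m+1)*m) = L * ((m*(m+1))*(ℓ+2)) := by rw [hTdef]; ring
          _ ≤ L * (L-1) := Nat.mul_le_mul_left L hstep
      have hTcc : T * ((m+1)*m) ≤ cc * ((m+1)*m) := le_trans hT1 hineq
      have : T ≤ cc := Nat.le_of_mul_le_mul_right hTcc (Nat.mul_pos (by omega) (by omega))
      omega
  -- conclude
  have hfinal : hMin n (s+1) c' ≤ A + L :=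
    le_trans (Nat.sInf_le ⟨c₁, hfree₁, rfl⟩) hhomb
  refine le_trans hfinal ?_
  -- pure arithmetic
  have hu2 : 2 ≤ ℓ+2 := by omega
  have hLb : L ≤ 4*m^2*(ℓ+2) := by nlinarith [hm1, hu2]
  have hL2 : L*L ≤ (4*m^2*(ℓ+2))*(4*m^2*(ℓ+2)) := Nat.mul_le_mul hLb hLb
  have hAe : A + L = 8*L^2*(ℓ+2) + (2*(ℓ+2) + 2) + L := by
    rw [hAdef, hQdef]; ring
  obtain ⟨K, hK⟩ : ∃ K, K = m^2*m^2*((ℓ+2)*(ℓ+2)*(ℓ+2)) := ⟨_, rfl⟩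
  have hm2 : 1 ≤ m^2 := Nat.one_le_pow _ _ (by omega)
  have hone : 1*1 ≤ m^2*m^2 := Nat.mul_le_mul hm2 hm2
  have huu : 1*1 ≤ (ℓ+2)*(ℓ+2) := Nat.mul_le_mul (by omega) (by omega)
  have hsq : L^2 ≤ 16*(m^2*m^2)*((ℓ+2)*(ℓ+2)) := by
    rw [pow_two]
    calc L*L ≤ (4*m^2*(ℓ+2))*(4*m^2*(ℓ+2)) := hL2
      _ = 16*(m^2*m^2)*((ℓ+2)*(ℓ+2)) := by ring
  have c1 : 8*L^2*(ℓ+2) ≤ 128*K := by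
    calc 8*L^2*(ℓ+2) ≤ 8*(16*(m^2*m^2)*((ℓ+2)*(ℓ+2)))*(ℓ+2) :=
          Nat.mul_le_mul_right _ (Nat.mul_le_mul_left 8 hsq)
      _ = 128*K := by rw [hK]; ring
  have hkey : (ℓ+2) ≤ K := by
    calc (ℓ+2) = 1*1*(1*1*(ℓ+2)) := by ring
      _ ≤ (m^2*m^2)*(((ℓ+2)*(ℓ+2))*(ℓ+2)) :=
          Nat.mul_le_mul hone (Nat.mul_le_mul huu le_rfl)
      _ = K := by rw [hK]
  have c2 : 2*(ℓ+2) + 2 ≤ 3*K := by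
    have h3u : 2*(ℓ+2)+2 ≤ 3*(ℓ+2) := by omega
    omega
  have hkey2 : m^2*(ℓ+2) ≤ K := by
    calc m^2*(ℓ+2) = (m^2*1)*(1*1*(ℓ+2)) := by ring
      _ ≤ (m^2*m^2)*(((ℓ+2)*(ℓ+2))*(ℓ+2)) :=
          Nat.mul_le_mul (Nat.mul_le_mul_left _ hm2) (Nat.mul_le_mul huu le_rfl)
      _ = K := by rw [hK]
  have c3 : L ≤ 4*K := by
    calc L ≤ 4*m^2*(ℓ+2) := hLb
      _ = 4*(m^2*(ℓ+2)) := by ring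
      _ ≤ 4*K := Nat.mul_le_mul_left 4 hkey2
  calc A + L = 8*L^2*(ℓ+2) + (2*(ℓ+2) + 2) + L := hAe
    _ ≤ 128*K + 3*K + 4*K := Nat.add_le_add (Nat.add_le_add c1 c2) c3
    _ ≤ 200*K := by omega
    _ = 200*m^4*(ℓ+2)^3 := by rw [hK]; ring
    _ = 200 * m^4 * (Nat.log 2 n + 2)^3 := by rw [hℓ]

lemma EH_step_down (hMn : ℕ → ℕ) (hMn1 : ℕ → ℕ)
    (hkey : ∀ n : ℕ, 1 ≤ n → hMn1 n ≤ 200 * (hMn n)^4 * (Nat.log 2 n + 2)^3)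
    (ε : ℝ) (hε : 0 < ε) (C : ℝ) (hC : 0 < C)
    (h : ∀ n : ℕ, 1 ≤ n → C * (n : ℝ) ^ ε ≤ (hMn1 n : ℝ)) :
    ∃ ε' : ℝ, 0 < ε' ∧ ∃ C' : ℝ, 0 < C' ∧ ∀ n : ℕ, 1 ≤ n →
      C' * (n : ℝ) ^ ε' ≤ (hMn n : ℝ) := by
  have hδpos : 0 < ε/6 := by positivity
  set δ := ε/6 with hδ
  have hlog2 : 0 < Real.log 2 := Real.log_pos (by norm_num)
  set K₁ : ℝ := 1/(δ*Real.log 2) + 2 with hK₁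
  have hK₁pos : 0 < K₁ := by positivity
  set C₂ : ℝ := C/(200*K₁^3) with hC₂
  have hC₂pos : 0 < C₂ := by positivity
  refine ⟨ε/8, by positivity, C₂ ^ ((4:ℝ)⁻¹), Real.rpow_pos_of_pos hC₂pos _, fun n hn => ?_⟩
  set m := hMn n with hm
  have hkeyn := hkey n hn
  have hn1 : (1:ℝ) ≤ (n:ℝ) := by exact_mod_cast hn
  have hnpos : (0:ℝ) < (n:ℝ) := by linarith
  have hnd1 : (1:ℝ) ≤ (n:ℝ)^δ := Real.one_le_rpow hn1 (le_of_lt hδpos)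
  have ha : ((Nat.log 2 n : ℝ) + 2) ≤ K₁ * (n:ℝ)^δ := by
    have h1 : (Nat.log 2 n : ℝ) ≤ Real.logb 2 n := Real.natLog_le_logb n 2
    have h2 : Real.logb 2 (n:ℝ) = Real.log (n:ℝ) / Real.log 2 := rfl
    have h3 : Real.log (n:ℝ) ≤ (n:ℝ)^δ / δ := Real.log_le_rpow_div (le_of_lt hnpos) hδpos
    have h4 : Real.log (n:ℝ) / Real.log 2 ≤ ((n:ℝ)^δ / δ) / Real.log 2 :=
      (div_le_div_iff_of_pos_right hlog2).2 h3
    have h5 : ((n:ℝ)^δ / δ) / Real.log 2 = (n:ℝ)^δ * (1/(δ*Real.log 2)) := by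
      field_simp
    have h6 : (2:ℝ) ≤ 2 * (n:ℝ)^δ := by nlinarith
    calc ((Nat.log 2 n : ℝ) + 2) ≤ (n:ℝ)^δ * (1/(δ*Real.log 2)) + 2 := by
          rw [← h5]
          have := le_trans h1 (le_trans (le_of_eq h2) h4)
          linarith
      _ ≤ (n:ℝ)^δ * (1/(δ*Real.log 2)) + 2 * (n:ℝ)^δ := by linarith
      _ = K₁ * (n:ℝ)^δ := by rw [hK₁]; ring
  have hlogpos : (0:ℝ) ≤ ((Nat.log 2 n : ℝ) + 2) := by positivity
  have hb : ((Nat.log 2 n : ℝ) + 2)^3 ≤ K₁^3 * ((n:ℝ)^δ)^3 := by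
    calc ((Nat.log 2 n : ℝ) + 2)^3 ≤ (K₁ * (n:ℝ)^δ)^3 := pow_le_pow_left₀ hlogpos ha 3
      _ = K₁^3 * ((n:ℝ)^δ)^3 := by rw [mul_pow]
  have hc3 : ((n:ℝ)^δ)^(3:ℕ) = (n:ℝ)^(ε/2) := by
    rw [← Real.rpow_natCast ((n:ℝ)^δ) 3, ← Real.rpow_mul (le_of_lt hnpos)]
    congr 1
    rw [hδ]; norm_num; ring
  have hchain : C * (n:ℝ)^ε ≤ 200 * K₁^3 * (m:ℝ)^4 * (n:ℝ)^(ε/2) := by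
    have h0 := h n hn
    have h5 : (hMn1 n : ℝ) ≤ 200*(m:ℝ)^4*((Nat.log 2 n : ℝ)+2)^3 := by
      have := hkeyn
      push_cast
      exact_mod_cast this
    calc C*(n:ℝ)^ε ≤ (hMn1 n : ℝ) := h0
      _ ≤ 200*(m:ℝ)^4*((Nat.log 2 n:ℝ)+2)^3 := h5
      _ ≤ 200*(m:ℝ)^4*(K₁^3*(n:ℝ)^(ε/2)) := by
          refine mul_le_mul_of_nonneg_left ?_ (by positivity)
          rw [← hc3]
          exact hb
      _ = 200*K₁^3*(m:ℝ)^4*(n:ℝ)^(ε/2) := by ring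
  have hm4 : C₂ * (n:ℝ)^(ε/2) ≤ (m:ℝ)^4 := by
    have hpos : (0:ℝ) < (n:ℝ)^(ε/2) := Real.rpow_pos_of_pos hnpos _
    have hsplit : (n:ℝ)^ε = (n:ℝ)^(ε/2) * (n:ℝ)^(ε/2) := by
      rw [← Real.rpow_add hnpos]; ring_nf
    have hcancel : C * (n:ℝ)^(ε/2) ≤ 200*K₁^3*(m:ℝ)^4 := by
      have h' : (C * (n:ℝ)^(ε/2)) * (n:ℝ)^(ε/2) ≤ (200*K₁^3*(m:ℝ)^4) * (n:ℝ)^(ε/2) := by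
        calc (C * (n:ℝ)^(ε/2)) * (n:ℝ)^(ε/2) = C * (n:ℝ)^ε := by rw [hsplit]; ring
          _ ≤ 200*K₁^3*(m:ℝ)^4*(n:ℝ)^(ε/2) := hchain
      exact le_of_mul_le_mul_right h' hpos
    rw [hC₂, div_mul_eq_mul_div, div_le_iff₀ (by positivity)]
    nlinarith [hcancel, hpos]
  have h41 : (C₂ ^ ((4:ℝ)⁻¹) * (n:ℝ)^(ε/8)) ^ (4:ℕ) = C₂ * (n:ℝ)^(ε/2) := by
    rw [mul_pow]
    congr 1
    · rw [← Real.rpow_natCast (C₂ ^ ((4:ℝ)⁻¹)) 4, ← Real.rpow_mul (le_of_lt hC₂pos)]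
      norm_num
    · rw [← Real.rpow_natCast ((n:ℝ)^(ε/8)) 4, ← Real.rpow_mul (le_of_lt hnpos)]
      congr 1
      ring
  have hles : (C₂ ^ ((4:ℝ)⁻¹) * (n:ℝ)^(ε/8))^(4:ℕ) ≤ (m:ℝ)^(4:ℕ) := by
    rw [h41]; exact hm4
  exact le_of_pow_le_pow_left₀ (by norm_num) (by positivity) hles


theorem stmt2 {k s' : ℕ} (c : Sym2 (Fin k) → Fin s') (hc : UsesAllColours c)
    (s : ℕ) (hs : s' < s) :
    EHProp s c ↔ EHProp (s + 1) c := by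
  by_cases hk : k ≤ 1
  · exact ⟨fun h => absurd h (not_EHProp_of_small c hk s),
      fun h => absurd h (not_EHProp_of_small c hk (s+1))⟩
  · push_neg at hk
    have hk2 : 2 ≤ k := hk
    constructor
    · rintro ⟨ε, hε, C, hC, h⟩
      refine ⟨ε, hε, C, hC, fun n hn => ?_⟩
      refine le_trans (h n hn) ?_
      exact_mod_cast hMin_mono c hk2 hs hn
    · rintro ⟨ε, hε, C, hC, h⟩
      exact EH_step_down (fun n => hMin n s c) (fun n => hMin n (s+1) c)
        (fun n hn => key_bound c hk2 hs hn) ε hε C hC h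
end

section
/- Let c' be an edge-colouring of a clique K_k using exactly s' colours. Then c' has the EH-property for s colours for every integer s ≥ s' if and only if c' has the EH-property for s' colours and for s'+1 colours. -/
lemma hMin_mono_aux {k s' : ℕ} (c' : Sym2 (Fin k) → Fin s') {n s : ℕ} (hs : s' + 1 ≤ s) :
    hMin n (s' + 1) c' ≤ hMin n s c' := by
  set A := {m | ∃ c : Sym2 (Fin n) → Fin s, ¬ HasCopy c c' ∧ homNum c = m} with hAdef
  by_cases hA : A.Nonempty
  · obtain ⟨c, hfree, hm⟩ := Nat.sInf_mem hA
    set cb : Sym2 (Fin n) → Fin (s' + 1) := fun e =>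
      if h : (c e).val < s' then ⟨(c e).val, by omega⟩ else ⟨s', by omega⟩ with hcb
    have hfree' : ¬ HasCopy cb c' := by
      rintro ⟨φ, hφ⟩
      refine hfree ⟨φ, fun x y hxy => ?_⟩
      have h1 := hφ x y hxy
      simp only [hcb] at h1
      split at h1
      · exact h1
      · exfalso; have h2 := (c' s(x, y)).is_lt; simp at h1; omega
    have hhom : homNum cb ≤ homNum c := by
      apply csSup_le_csSup
      · refine ⟨n, ?_⟩
        rintro m ⟨X, _, hX⟩
        calc m = X.card := hX.symm
          _ ≤ (Finset.univ : Finset (Fin n)).card := Finset.card_le_univ X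
          _ = n := by simp
      · exact ⟨0, ∅, ⟨⟨0, by omega⟩, by simp⟩, rfl⟩
      · rintro m ⟨X, ⟨i, hi⟩, hX⟩
        refine ⟨X, ⟨⟨i.val, by omega⟩, fun x hx y hy hxy hco => ?_⟩, hX⟩
        refine hi x hx y hy hxy ?_
        have hcv : (c s(x, y)).val = i.val := by rw [hco]
        have hile : i.val ≤ s' := by omega
        simp only [hcb]
        rcases lt_or_eq_of_le hile with h | h
        · rw [dif_pos (by omega)]
          exact Fin.ext (by simp [hcv])
        · rw [dif_neg (by omega)]
          exact Fin.ext (by simp [h])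
    calc hMin n (s' + 1) c' ≤ homNum cb := Nat.sInf_le ⟨cb, hfree', rfl⟩
      _ ≤ homNum c := hhom
      _ = hMin n s c' := hm
  · have hB : {m | ∃ c : Sym2 (Fin n) → Fin (s' + 1), ¬ HasCopy c c' ∧ homNum c = m} = ∅ := by
      rw [Set.eq_empty_iff_forall_notMem]
      rintro m ⟨cb, hfree, _⟩
      refine hA ⟨homNum (fun e => Fin.castLE hs (cb e)), fun e => Fin.castLE hs (cb e), ?_, rfl⟩
      rintro ⟨φ, hφ⟩
      refine hfree ⟨φ, fun x y hxy => ?_⟩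
      have := hφ x y hxy
      simpa using this
    rw [Set.not_nonempty_iff_eq_empty] at hA
    unfold hMin
    rw [hB, ← hAdef, hA, Nat.sInf_empty]

theorem stmt3 {k s' : ℕ} (c' : Sym2 (Fin k) → Fin s') (hc : UsesAllColours c') :
    (∀ s : ℕ, s' ≤ s → EHProp s c') ↔ (EHProp s' c' ∧ EHProp (s' + 1) c') := by
  constructor
  · intro h
    exact ⟨h s' le_rfl, h (s' + 1) (by omega)⟩
  · rintro ⟨h1, h2⟩ s hs
    rcases eq_or_lt_of_le hs with rfl | hlt
    · exact h1
    · obtain ⟨ε, hε, C, hC, hball⟩ := h2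
      refine ⟨ε, hε, C, hC, fun n hn => (hball n hn).trans ?_⟩
      exact_mod_cast hMin_mono_aux c' hlt
end

section
/- Let c be the 2-edge-colouring of K_4 on vertex set {1,2,3,4} with colour 1 on the pairs {1,2}, {2,3}, {3,4} and colour 2 on the pairs {1,3}, {2,4}, {1,4} (each colour class is a path on 4 vertices). Then for every n ≥ 1, every c-free 2-edge-colouring of K_n has a homogeneous set of size at least n^{1/2}; equivalently, h_2(n, c) ≥ n^{1/2}. -/
/-- The 2-edge-colouring of `K_4` in which colour `0` forms the path
`0-1-2-3` and colour `1` forms the complementary path `1-3-0-2`. -/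
def cP4 : Sym2 (Fin 4) → Fin 2 := fun e =>
  if e = s((0 : Fin 4), (1 : Fin 4)) ∨ e = s((1 : Fin 4), (2 : Fin 4)) ∨
     e = s((2 : Fin 4), (3 : Fin 4)) then 0 else 1

/-!
Let `G` be the graph of colour-`0` edges. The colour-`0` class of `cP4` is a path on four
vertices whose complement is again such a path, so for a `cP4`-free colouring neither `G` nor
`Gᶜ` contains an induced `P₄`. By Seinsche's theorem every induced-`P₄`-free graph on at least
two vertices is disconnected or has disconnected complement: adding a vertex `x` to a
disconnected `S`, either `x` is adjacent to everything, or `x` splits some side into neighbours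
and non-neighbours, and an edge between these two parts extends to an induced `P₄` through a
neighbour of `x` on the other side. Gluing cliques and independent sets across the two sides
then gives, by induction, a clique `K` and an independent set `I` with `n ≤ |K| |I|`
(cographs are perfect), and the larger of the two has at least `√n` vertices.
-/

open Finset

namespace SimpleGraph

variable {V : Type*}

def IsInducedP4 (G : SimpleGraph V) (a b c d : V) : Prop :=
  G.Adj a b ∧ G.Adj b c ∧ G.Adj c d ∧ Gᶜ.Adj a c ∧ Gᶜ.Adj b d ∧ Gᶜ.Adj a d

def P4Free (G : SimpleGraph V) : Prop := ∀ a b c d, ¬ G.IsInducedP4 a b c d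

variable {G : SimpleGraph V}

lemma IsInducedP4.compl {a b c d : V} (h : G.IsInducedP4 a b c d) :
    Gᶜ.IsInducedP4 c a d b := by
  obtain ⟨hab, hbc, hcd, hac, hbd, had⟩ := h
  refine ⟨hac.symm, had, hbd.symm, ?_, ?_, ?_⟩ <;> rw [compl_compl]
  exacts [hcd, hab, hbc.symm]

lemma P4Free.compl (hG : G.P4Free) : Gᶜ.P4Free :=
  fun a b c d h => hG c a d b (compl_compl G ▸ h.compl)

def CardLeCliqueMulIndepOn (G : SimpleGraph V) (S : Finset V) : Prop :=
  ∃ K ⊆ S, ∃ I ⊆ S, G.IsClique (K : Set V) ∧ G.IsIndepSet (I : Set V) ∧ #S ≤ #K * #I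

lemma CardLeCliqueMulIndepOn.compl {S : Finset V} (h : G.CardLeCliqueMulIndepOn S) :
    Gᶜ.CardLeCliqueMulIndepOn S := by
  obtain ⟨K, hK, I, hI, hKc, hIi, hcard⟩ := h
  exact ⟨I, hI, K, hK, (isClique_compl G).2 hIi, (isIndepSet_compl G).2 hKc,
    mul_comm #K #I ▸ hcard⟩

lemma cardLeCliqueMulIndepOn_of_card_le_one {S : Finset V} (hS : #S ≤ 1) :
    G.CardLeCliqueMulIndepOn S :=
  have hsub := card_le_one_iff_subsingleton.1 hS
  ⟨S, subset_rfl, S, subset_rfl, hsub.pairwise _, hsub.pairwise _, Nat.le_mul_self _⟩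

variable [DecidableEq V]

def IsDisconnectedOn (G : SimpleGraph V) (S : Finset V) : Prop :=
  ∃ A B : Finset V, Disjoint A B ∧ A ∪ B = S ∧ A.Nonempty ∧ B.Nonempty ∧
    ∀ a ∈ A, ∀ b ∈ B, ¬ G.Adj a b

lemma isDisconnectedOn_insert_of_forall_not_adj {S : Finset V} {x : V} (hx : x ∉ S)
    (hS : S.Nonempty) (h : ∀ y ∈ S, ¬ G.Adj x y) : G.IsDisconnectedOn (insert x S) :=
  ⟨{x}, S, disjoint_singleton_left.2 hx, (insert_eq x S).symm, singleton_nonempty x, hS,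
    by simpa using h⟩

lemma P4Free.isDisconnectedOn_insert_of_not_adj (hG : G.P4Free) {A B : Finset V} {x y : V}
    (hAB : Disjoint A B) (hB : B.Nonempty) (hno : ∀ a ∈ A, ∀ b ∈ B, ¬ G.Adj a b)
    (hxA : x ∉ A) (hxB : x ∉ B) (hy : y ∈ A) (hxy : ¬ G.Adj x y) :
    G.IsDisconnectedOn (insert x (A ∪ B)) := by
  classical
  by_cases hw : ∃ w ∈ B, G.Adj x w
  swap
  · push Not at hw
    refine ⟨insert x A, B, disjoint_insert_left.2 ⟨hxB, hAB⟩, insert_union _ _ _,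
      insert_nonempty x A, hB, ?_⟩
    simp only [mem_insert, forall_eq_or_imp]
    exact ⟨hw, hno⟩
  obtain ⟨w, hwB, hxw⟩ := hw
  set M := A.filter (¬ G.Adj x ·) with hM
  set N := A.filter (G.Adj x ·) with hN
  by_cases hMN : ∃ q ∈ M, ∃ p ∈ N, G.Adj q p
  · exfalso
    obtain ⟨q, hq, p, hp, hqp⟩ := hMN
    rw [hM, mem_filter] at hq
    rw [hN, mem_filter] at hp
    refine hG q p x w ⟨hqp, hp.2.symm, hxw, ?_, ?_, ?_⟩ <;> rw [compl_adj]
    · exact ⟨ne_of_mem_of_not_mem hq.1 hxA, fun h => hq.2 h.symm⟩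
    · exact ⟨fun e => Finset.disjoint_left.1 hAB hp.1 (e ▸ hwB), hno p hp.1 w hwB⟩
    · exact ⟨fun e => Finset.disjoint_left.1 hAB hq.1 (e ▸ hwB), hno q hq.1 w hwB⟩
  push Not at hMN
  -- the non-neighbours of `x` in `A` now split off from everything else
  refine ⟨M, insert x (N ∪ B), ?_, ?_, ⟨y, by simp [hM, hy, hxy]⟩,
    insert_nonempty _ _, ?_⟩
  · rw [Finset.disjoint_left]
    intro z hzM hz
    simp only [hM, hN, mem_filter, mem_insert, mem_union] at hzM hz
    grind [Finset.disjoint_left]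
  · ext z
    simp only [hM, hN, mem_filter, mem_insert, mem_union]
    tauto
  · intro q hq z hz
    simp only [mem_insert, mem_union] at hz
    rcases hz with rfl | hz | hz
    · exact fun h => (mem_filter.1 hq).2 h.symm
    · exact hMN q hq z hz
    · exact hno q (mem_filter.1 hq).1 z hz

lemma P4Free.isDisconnectedOn_insert (hG : G.P4Free) {S : Finset V} {x : V} (hx : x ∉ S)
    (hS : G.IsDisconnectedOn S) :
    G.IsDisconnectedOn (insert x S) ∨ Gᶜ.IsDisconnectedOn (insert x S) := by
  obtain ⟨A, B, hAB, rfl, hA, hB, hno⟩ := hS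
  by_cases hall : ∀ y ∈ A ∪ B, G.Adj x y
  · refine .inr (isDisconnectedOn_insert_of_forall_not_adj hx (hA.mono subset_union_left) ?_)
    exact fun y hy h => (compl_adj G x y).1 h |>.2 (hall y hy)
  push Not at hall
  obtain ⟨y, hy, hxy⟩ := hall
  rw [mem_union, not_or] at hx
  rcases mem_union.1 hy with hy | hy
  · exact .inl (hG.isDisconnectedOn_insert_of_not_adj hAB hB hno hx.1 hx.2 hy hxy)
  · rw [union_comm]
    exact .inl (hG.isDisconnectedOn_insert_of_not_adj hAB.symm hA
      (fun b hb a ha h => hno a ha b hb h.symm) hx.2 hx.1 hy hxy)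

theorem P4Free.isDisconnectedOn_or_compl (hG : G.P4Free) {S : Finset V} (hS : 2 ≤ #S) :
    G.IsDisconnectedOn S ∨ Gᶜ.IsDisconnectedOn S := by
  induction S using Finset.induction_on with
  | empty => simp at hS
  | insert x S hx ih =>
    rw [card_insert_of_notMem hx] at hS
    obtain hS | hS : #S = 1 ∨ 2 ≤ #S := by omega
    · obtain ⟨y, rfl⟩ := card_eq_one.1 hS
      have hxy : x ≠ y := by simpa using hx
      by_cases h : G.Adj x y
      · exact .inr (isDisconnectedOn_insert_of_forall_not_adj hx (singleton_nonempty y)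
          (by simpa [hxy] using h))
      · exact .inl (isDisconnectedOn_insert_of_forall_not_adj hx (singleton_nonempty y)
          (by simpa using h))
    · rcases ih hS with h | h
      · exact hG.isDisconnectedOn_insert hx h
      · simpa only [compl_compl, or_comm] using hG.compl.isDisconnectedOn_insert hx h

lemma cardLeCliqueMulIndepOn_union {A B : Finset V} (hAB : Disjoint A B)
    (hno : ∀ a ∈ A, ∀ b ∈ B, ¬ G.Adj a b) (hA : G.CardLeCliqueMulIndepOn A)
    (hB : G.CardLeCliqueMulIndepOn B) : G.CardLeCliqueMulIndepOn (A ∪ B) := by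
  obtain ⟨KA, hKA, IA, hIA, hKAc, hIAi, hA⟩ := hA
  obtain ⟨KB, hKB, IB, hIB, hKBc, hIBi, hB⟩ := hB
  obtain ⟨K, hK, hKc, hKA', hKB'⟩ :
      ∃ K ⊆ A ∪ B, G.IsClique (K : Set V) ∧ #KA ≤ #K ∧ #KB ≤ #K := by
    rcases le_total #KA #KB with h | h
    · exact ⟨KB, hKB.trans subset_union_right, hKBc, h, le_rfl⟩
    · exact ⟨KA, hKA.trans subset_union_left, hKAc, le_rfl, h⟩
  have hIi : G.IsIndepSet ((IA ∪ IB : Finset V) : Set V) := by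
    rw [coe_union, IsIndepSet, Set.pairwise_union]
    exact ⟨hIAi, hIBi, fun a ha b hb _ =>
      ⟨hno a (hIA ha) b (hIB hb), fun h => hno a (hIA ha) b (hIB hb) h.symm⟩⟩
  refine ⟨K, hK, IA ∪ IB, union_subset_union hIA hIB, hKc, hIi, ?_⟩
  calc #(A ∪ B) = #A + #B := card_union_of_disjoint hAB
    _ ≤ #K * #IA + #K * #IB :=
      add_le_add (hA.trans (Nat.mul_le_mul_right _ hKA'))
        (hB.trans (Nat.mul_le_mul_right _ hKB'))
    _ = #K * #(IA ∪ IB) := by rw [card_union_of_disjoint (hAB.mono hIA hIB), mul_add]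

lemma IsDisconnectedOn.cardLeCliqueMulIndepOn {S : Finset V} (h : G.IsDisconnectedOn S)
    (ih : ∀ T ⊂ S, G.CardLeCliqueMulIndepOn T) : G.CardLeCliqueMulIndepOn S := by
  obtain ⟨A, B, hAB, rfl, hA, hB, hno⟩ := h
  refine cardLeCliqueMulIndepOn_union hAB hno (ih A ?_) (ih B ?_)
  · obtain ⟨b, hb⟩ := hB
    exact (ssubset_iff_of_subset subset_union_left).2
      ⟨b, mem_union_right A hb, Finset.disjoint_right.1 hAB hb⟩
  · obtain ⟨a, ha⟩ := hA
    exact (ssubset_iff_of_subset subset_union_right).2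
      ⟨a, mem_union_left B ha, Finset.disjoint_left.1 hAB ha⟩

theorem P4Free.cardLeCliqueMulIndepOn (hG : G.P4Free) (S : Finset V) :
    G.CardLeCliqueMulIndepOn S := by
  induction S using Finset.strongInduction with
  | H S ih =>
  rcases le_or_gt #S 1 with hS | hS
  · exact cardLeCliqueMulIndepOn_of_card_le_one hS
  rcases hG.isDisconnectedOn_or_compl hS with h | h
  · exact h.cardLeCliqueMulIndepOn ih
  · simpa using (h.cardLeCliqueMulIndepOn fun T hT => (ih T hT).compl).compl

end SimpleGraph

open SimpleGraph

section Colouring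

variable {n s : ℕ} {c : Sym2 (Fin n) → Fin s} {X : Finset (Fin n)}

lemma isHomog_of_isIndepSet {i : Fin s}
    (h : (fromEdgeSet {e | c e = i}).IsIndepSet (X : Set (Fin n))) : IsHomog c X :=
  ⟨i, fun _ hx _ hy hxy hc => h hx hy hxy ((fromEdgeSet_adj _).2 ⟨hc, hxy⟩)⟩

lemma isHomog_of_isClique {i j : Fin s} (hij : i ≠ j)
    (h : (fromEdgeSet {e | c e = i}).IsClique (X : Set (Fin n))) : IsHomog c X :=
  ⟨j, fun _ hx _ hy hxy hc => hij (((fromEdgeSet_adj _).1 (h hx hy hxy)).1.symm.trans hc)⟩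

end Colouring

lemma p4Free_of_not_hasCopy {n : ℕ} {c : Sym2 (Fin n) → Fin 2} (h : ¬ HasCopy c cP4) :
    (fromEdgeSet {e | c e = 0}).P4Free := by
  set G := fromEdgeSet {e | c e = 0}
  have col0 {u v : Fin n} (huv : G.Adj u v) : c s(u, v) = 0 := ((fromEdgeSet_adj _).1 huv).1
  have col1 {u v : Fin n} (huv : Gᶜ.Adj u v) : c s(u, v) = 1 :=
    Fin.eq_one_of_ne_zero _ fun h0 => huv.2 ((fromEdgeSet_adj _).2 ⟨h0, huv.1⟩)
  rintro a b c' d ⟨hab, hbc, hcd, hac, hbd, had⟩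
  have hinj : Function.Injective ![a, b, c', d] := by
    intro x y hxy
    fin_cases x <;> fin_cases y <;>
      simp_all [eq_comm, hab.ne, hbc.ne, hcd.ne, hac.ne, hbd.ne, had.ne]
  have hlt : ∀ x y : Fin 4, x < y →
      c s(![a, b, c', d] x, ![a, b, c', d] y) = cP4 s(x, y) := by
    intro x y hxy
    fin_cases x <;> fin_cases y <;> first
      | exact absurd hxy (by decide)
      | simp [cP4, col0 hab, col0 hbc, col0 hcd, col1 hac, col1 hbd, col1 had]
  refine h ⟨⟨_, hinj⟩, fun x y hxy => ?_⟩
  simp only [Function.Embedding.coeFn_mk]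
  rcases lt_or_gt_of_ne hxy with hxy | hxy
  · rw [hlt x y hxy]
  · rw [Sym2.eq_swap, hlt y x hxy, Sym2.eq_swap]

lemma rpow_half_le_of_le_mul_self {n m : ℕ} (h : n ≤ m * m) :
    (n : ℝ) ^ ((1 : ℝ) / 2) ≤ m := by
  rw [← Real.sqrt_eq_rpow, Real.sqrt_le_left (Nat.cast_nonneg m)]
  exact_mod_cast (sq m).symm ▸ h

theorem stmt8 :
    ∀ n : ℕ, 1 ≤ n → ∀ c'' : Sym2 (Fin n) → Fin 2, ¬ HasCopy c'' cP4 →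
      ∃ X : Finset (Fin n), IsHomog c'' X ∧ (n : ℝ) ^ ((1 : ℝ) / 2) ≤ (X.card : ℝ) := by
  intro n _ c hfree
  obtain ⟨K, -, I, -, hK, hI, hcard⟩ :=
    (p4Free_of_not_hasCopy hfree).cardLeCliqueMulIndepOn univ
  rw [card_univ, Fintype.card_fin] at hcard
  rcases le_total #K #I with h | h
  · exact ⟨I, isHomog_of_isIndepSet hI,
      rpow_half_le_of_le_mul_self (hcard.trans (Nat.mul_le_mul_right _ h))⟩
  · exact ⟨K, isHomog_of_isClique (by decide : (0 : Fin 2) ≠ 1) hK,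
      rpow_half_le_of_le_mul_self (hcard.trans (Nat.mul_le_mul_left _ h))⟩
end

section
/- Let c be the 2-edge-colouring of K_4 on vertex set {1,2,3,4} with colour 1 on the pairs {1,2}, {2,3}, {3,4} and colour 2 on the pairs {1,3}, {2,4}, {1,4} (each colour class is a path on 4 vertices). For every ε > 0 and all sufficiently large n there exists a c-free 2-edge-colouring of K_n in which every homogeneous set has size at most (1+ε)·n^{1/2}. -/
theorem stmt9 :
    ∀ ε : ℝ, 0 < ε → ∃ N : ℕ, ∀ n : ℕ, N ≤ n →
      ∃ c'' : Sym2 (Fin n) → Fin 2, ¬ HasCopy c'' cP4 ∧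
        ∀ X : Finset (Fin n), IsHomog c'' X →
          (X.card : ℝ) ≤ (1 + ε) * (n : ℝ) ^ ((1 : ℝ) / 2) := by
  intro ε hε
  refine ⟨⌈ε⁻¹ ^ 2⌉₊ + 1, fun n hn => ?_⟩
  set b := Nat.sqrt n + 1 with hbdef
  set c : Sym2 (Fin n) → Fin 2 := Sym2.lift
    ⟨fun x y => if x.val / b = y.val / b then 0 else 1, by
      intro x y; simp only [eq_comm]⟩ with hc
  have hcval : ∀ x y : Fin n, c s(x, y) = if x.val / b = y.val / b then 0 else 1 := by
    intro x y; simp [hc]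
  -- card bound on homogeneous sets (in ℕ)
  have hcard : ∀ X : Finset (Fin n), IsHomog c X → X.card ≤ b := by
    intro X ⟨i, hi⟩
    fin_cases i
    · -- colour 0 missing: all pairs cross blocks, x ↦ x/b injective
      have hinj : Set.InjOn (fun x : Fin n => x.val / b) X := by
        intro x hx y hy hxy
        by_contra hne
        have := hi x hx y hy hne
        rw [hcval] at this
        simp [hxy] at this
      calc X.card = (X.image (fun x : Fin n => x.val / b)).card :=
            (Finset.card_image_of_injOn hinj).symm
        _ ≤ (Finset.range b).card := by
            apply Finset.card_le_card
            intro m hm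
            simp only [Finset.mem_image] at hm
            obtain ⟨x, _, rfl⟩ := hm
            simp only [Finset.mem_range]
            have hx : x.val < b * b := lt_of_lt_of_le x.isLt (le_of_lt (Nat.lt_succ_sqrt n))
            exact Nat.div_lt_of_lt_mul hx
        _ = b := Finset.card_range b
    · -- colour 1 missing: all in one block
      rcases X.eq_empty_or_nonempty with rfl | ⟨x0, hx0⟩
      · simp
      have hall : ∀ x ∈ X, x.val / b = x0.val / b := by
        intro x hx
        by_cases hxe : x = x0
        · rw [hxe]
        · have := hi x hx x0 hx0 hxe
          rw [hcval] at this
          by_contra hne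
          simp [hne] at this
      calc X.card = (X.image Fin.val).card :=
            (Finset.card_image_of_injOn (Fin.val_injective.injOn)).symm
        _ ≤ (Finset.Ico (b * (x0.val / b)) (b * (x0.val / b) + b)).card := by
            apply Finset.card_le_card
            intro m hm
            simp only [Finset.mem_image] at hm
            obtain ⟨x, hx, rfl⟩ := hm
            have h1 := hall x hx
            have h2 := Nat.div_add_mod x.val b
            have h3 : x.val % b < b := Nat.mod_lt _ (by omega)
            rw [h1] at h2
            simp only [Finset.mem_Ico]
            omega
        _ = b := by rw [Nat.card_Ico]; omega
  refine ⟨c, ?_, ?_⟩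
  · rintro ⟨φ, hφ⟩
    have h01 := hφ 0 1 (by decide)
    have h12 := hφ 1 2 (by decide)
    have h02 := hφ 0 2 (by decide)
    have e01 : (cP4 s((0:Fin 4), 1) : ℕ) = 0 := by decide
    have e12 : (cP4 s((1:Fin 4), 2) : ℕ) = 0 := by decide
    have e02 : (cP4 s((0:Fin 4), 2) : ℕ) = 1 := by decide
    rw [e01, hcval] at h01
    rw [e12, hcval] at h12
    rw [e02, hcval] at h02
    split_ifs at h01 h12 h02 with hA hB hC <;> simp_all
  · intro X hX
    have h1 : (X.card : ℝ) ≤ (Nat.sqrt n : ℝ) + 1 := by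
      have := hcard X hX
      push_cast [hbdef] at *
      exact_mod_cast this
    have hs : (n : ℝ) ^ ((1 : ℝ) / 2) = Real.sqrt n := by
      rw [Real.sqrt_eq_rpow]
    have hns : (Nat.sqrt n : ℝ) ≤ Real.sqrt n := by
      have h := Real.sqrt_le_sqrt (show ((Nat.sqrt n : ℝ))^2 ≤ (n : ℝ) by exact_mod_cast Nat.sqrt_le' n)
      rwa [Real.sqrt_sq (by positivity)] at h
    have hone : 1 ≤ ε * Real.sqrt n := by
      have h2 : (ε⁻¹ ^ 2 : ℝ) ≤ n := by
        calc (ε⁻¹ ^ 2 : ℝ) ≤ ⌈ε⁻¹ ^ 2⌉₊ := Nat.le_ceil _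
          _ ≤ n := by exact_mod_cast Nat.le_of_succ_le hn
      have h3 : ε⁻¹ ≤ Real.sqrt n := by
        have h := Real.sqrt_le_sqrt h2
        rwa [Real.sqrt_sq (by positivity)] at h
      calc (1 : ℝ) = ε * ε⁻¹ := (mul_inv_cancel₀ hε.ne').symm
        _ ≤ ε * Real.sqrt n := by
            apply mul_le_mul_of_nonneg_left h3 hε.le
    rw [hs]
    calc (X.card : ℝ) ≤ (Nat.sqrt n : ℝ) + 1 := h1
      _ ≤ Real.sqrt n + ε * Real.sqrt n := add_le_add hns hone
      _ = (1 + ε) * Real.sqrt n := by ring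
end

section
/- For every integer s ≥ 2 there is a constant C > 0 such that for all sufficiently large m there exists an s-edge-colouring of K_m in which every vertex subset of size at least C·log m contains, for each colour i ∈ {1,…,s}, a pair of vertices coloured i; in particular, every homogeneous set of this colouring has size less than C·log m. -/
open Finset Fintype

/-!
Erdős's counting argument. For a `k`-set `X` and a colour `i`, the colourings of the pairs that
miss `i` on the `k.choose 2` pairs inside `X` make up a fraction `(1 - 1/s) ^ k.choose 2` of all
colourings. There are `m.choose k * s ≤ m ^ (k + 1)` choices of `(X, i)`, and since
`(1 - 1/s) ^ s ≤ 1/2`, taking `k ≈ 4 s log₂ m` makes the union of these sets of bad colourings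
smaller than the set of all colourings.
-/

lemma two_mul_sub_one_pow_self_le {s : ℕ} (hs : 1 ≤ s) : 2 * (s - 1) ^ s ≤ s ^ s := by
  obtain ⟨t, rfl⟩ := Nat.exists_eq_add_of_le' hs
  rw [Nat.add_sub_cancel]
  rcases Nat.eq_zero_or_pos t with rfl | ht
  · simp
  have hinv : (0 : ℚ) ≤ 1 / t := by positivity
  have h2 : (2 : ℚ) ≤ (1 + 1 / t) ^ (t + 1) :=
    calc (2 : ℚ) ≤ 1 + (t + 1 : ℕ) * (1 / t) := by
          rw [Nat.cast_succ, add_mul, one_mul, mul_one_div_cancel (by positivity)]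
          linarith
      _ ≤ (1 + 1 / t) ^ (t + 1) := one_add_mul_le_pow (by linarith) _
  have : (2 : ℚ) * t ^ (t + 1) ≤ ((t + 1 : ℕ) : ℚ) ^ (t + 1) :=
    calc (2 : ℚ) * t ^ (t + 1) ≤ (1 + 1 / t) ^ (t + 1) * t ^ (t + 1) := by gcongr
      _ = _ := by rw [← mul_pow]; push_cast; congr 1; field_simp
  exact_mod_cast this

lemma pow_mul_pow_sub_le_pow_mul_pow_sub {R : Type*} [CommSemiring R] [PartialOrder R]
    [IsOrderedRing R] {a b : R} (ha : 0 ≤ a) (hab : a ≤ b) {K t N : ℕ} (hKt : K ≤ t)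
    (htN : t ≤ N) : a ^ t * b ^ (N - t) ≤ a ^ K * b ^ (N - K) := by
  obtain ⟨d, rfl⟩ := Nat.exists_eq_add_of_le hKt
  rw [show N - K = d + (N - (K + d)) by omega, pow_add, pow_add, mul_assoc]
  gcongr
  exact pow_nonneg (ha.trans hab) _

lemma card_piFinset_ite_erase {α β : Type*} [Fintype α] [DecidableEq α] [Fintype β]
    [DecidableEq β] (A : Finset α) (b : β) :
    #(piFinset fun a => if a ∈ A then univ.erase b else univ) =
      (card β - 1) ^ #A * card β ^ (card α - #A) := by
  simp [card_piFinset, apply_ite card, card_erase_of_mem (mem_univ b), card_univ, prod_ite,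
    filter_not, card_univ_sdiff]

theorem exists_forall_surjOn_of_card_mul_pow_lt {ι α β : Type*} [Fintype α] [DecidableEq α]
    [Fintype β] [DecidableEq β] [Nonempty β] (J : Finset ι) (A : ι → Finset α) {K : ℕ}
    (hK : ∀ j ∈ J, K ≤ #(A j)) (h : #J * card β * (card β - 1) ^ K < card β ^ K) :
    ∃ f : α → β, ∀ j ∈ J, Set.SurjOn f (A j) Set.univ := by
  classical
  set n := card β
  let avoiding : ι × β → Finset (α → β) := fun p =>
    piFinset fun a => if a ∈ A p.1 then univ.erase p.2 else univ
  have h_avoiding : ∀ p ∈ J ×ˢ univ, #(avoiding p) ≤ (n - 1) ^ K * n ^ (card α - K) := by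
    rintro ⟨j, b⟩ hp
    have hj := (mem_product.mp hp).1
    rw [card_piFinset_ite_erase]
    exact pow_mul_pow_sub_le_pow_mul_pow_sub (Nat.zero_le _) (Nat.sub_le n 1) (hK j hj)
      (card_le_univ _)
  have hKα : J.Nonempty → K ≤ card α := fun ⟨j, hj⟩ => (hK j hj).trans (card_le_univ _)
  have h_bad : #((J ×ˢ univ).biUnion avoiding) < card (α → β) := by
    rw [card_fun]
    rcases J.eq_empty_or_nonempty with rfl | hJ
    · simpa using Nat.pos_of_ne_zero (pow_ne_zero _ card_ne_zero)
    calc #((J ×ˢ univ).biUnion avoiding)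
        ≤ #J * n * ((n - 1) ^ K * n ^ (card α - K)) := by
          simpa [card_product, mul_comm] using card_biUnion_le_card_mul _ _ _ h_avoiding
      _ = #J * n * (n - 1) ^ K * n ^ (card α - K) := by ring
      _ < n ^ K * n ^ (card α - K) := by gcongr
      _ = n ^ card α := by rw [← pow_add, Nat.add_sub_cancel' (hKα hJ)]
  obtain ⟨f, -, hf⟩ := exists_mem_notMem_of_card_lt_card h_bad
  refine ⟨f, fun j hj b _ => ?_⟩
  have : f ∉ avoiding (j, b) := fun hfb => hf (mem_biUnion.mpr ⟨(j, b), by simp [hj], hfb⟩)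
  simp only [avoiding, mem_piFinset, not_forall] at this
  obtain ⟨a, ha⟩ := this
  split_ifs at ha with haA
  · exact ⟨a, haA, by simpa using ha⟩
  · simp at ha

lemma exists_le_choose_two_and_choose_mul_pow_lt {s m k : ℕ} (hs : 2 ≤ s) (hsm : s ≤ m)
    (hL : 3 ≤ Nat.log 2 m) (hk : 4 * s * Nat.log 2 m ≤ k) :
    ∃ K ≤ k.choose 2, m.choose k * s * (s - 1) ^ K < s ^ K := by
  set L := Nat.log 2 m
  set q := (L + 1) * (k + 1)
  -- `m.choose k * s < 2 ^ q`, and `2 * (s - 1) ^ s ≤ s ^ s` gives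
  -- `2 ^ q * (s - 1) ^ (s * q) ≤ s ^ (s * q)`.
  refine ⟨s * q, ?_, ?_⟩
  · rw [Nat.choose_two_right, Nat.le_div_iff_mul_le two_pos]
    have hsL : 2 * 3 ≤ s * L := Nat.mul_le_mul hs hL
    have hk' : 4 * (s * L) ≤ k := by rwa [← mul_assoc]
    obtain ⟨b, rfl⟩ : ∃ b, k = b + 1 := ⟨k - 1, by omega⟩
    rw [Nat.add_sub_cancel]
    have hLb : 2 * L + b + 2 ≤ L * b := by nlinarith
    calc s * q * 2 = 2 * s * (L * b + 2 * L + b + 2) := by ring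
      _ ≤ 2 * s * (2 * (L * b)) := by gcongr; omega
      _ = 4 * (s * L) * b := by ring
      _ ≤ (b + 1) * b := by gcongr
  · have h_choose : m.choose k * s < 2 ^ q :=
      calc m.choose k * s ≤ m ^ k * m := Nat.mul_le_mul (Nat.choose_le_pow m k) hsm
        _ = m ^ (k + 1) := (pow_succ m k).symm
        _ < (2 ^ (L + 1)) ^ (k + 1) :=
          Nat.pow_lt_pow_left (Nat.lt_pow_succ_log_self one_lt_two m) k.succ_ne_zero
        _ = 2 ^ q := (pow_mul 2 _ _).symm
    calc m.choose k * s * (s - 1) ^ (s * q) < 2 ^ q * ((s - 1) ^ s) ^ q := by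
          rw [← pow_mul, mul_comm s q]
          gcongr
          exact pow_pos (by omega) _
      _ = (2 * (s - 1) ^ s) ^ q := (mul_pow _ _ _).symm
      _ ≤ (s ^ s) ^ q := by gcongr; exact two_mul_sub_one_pow_self_le (by omega)
      _ = s ^ (s * q) := (pow_mul _ _ _).symm

theorem stmt13 (s : ℕ) (hs : 2 ≤ s) :
    ∃ C : ℝ, 0 < C ∧ ∃ M : ℕ, ∀ m : ℕ, M ≤ m →
      ∃ c : Sym2 (Fin m) → Fin s,
        ∀ X : Finset (Fin m), C * Real.logb 2 m ≤ (X.card : ℝ) →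
          ∀ i : Fin s, ∃ x ∈ X, ∃ y ∈ X, x ≠ y ∧ c s(x, y) = i := by
  have : NeZero s := ⟨by omega⟩
  refine ⟨4 * s, by positivity, 8 + s, fun m hm => ?_⟩
  set k := ⌈4 * s * Real.logb 2 m⌉₊
  have hL : 3 ≤ Nat.log 2 m := Nat.le_log_of_pow_le one_lt_two (by omega)
  have hk : 4 * s * Nat.log 2 m ≤ k := by
    rw [← Nat.cast_le (α := ℝ)]
    push_cast
    exact (mul_le_mul_of_nonneg_left (Real.natLog_le_logb m 2) (by positivity)).trans
      (Nat.le_ceil _)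
  obtain ⟨K, hK, hlt⟩ := exists_le_choose_two_and_choose_mul_pow_lt hs (by omega) hL hk
  obtain ⟨c, hc⟩ := exists_forall_surjOn_of_card_mul_pow_lt (β := Fin s) (K := K)
    (powersetCard k univ)
    (fun X : Finset (Fin m) => X.offDiag.image Sym2.mk.uncurry)
    (fun X hX => by rwa [Sym2.card_image_offDiag, (mem_powersetCard_univ.mp hX)])
    (by simpa using hlt)
  refine ⟨c, fun X hX i => ?_⟩
  obtain ⟨Y, hYX, hY⟩ := exists_subset_card_eq (Nat.ceil_le.mpr hX)
  obtain ⟨_, he, hce⟩ := hc Y (mem_powersetCard_univ.mpr hY) (Set.mem_univ i)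
  obtain ⟨⟨x, y⟩, hxy, rfl⟩ := mem_image.mp he
  obtain ⟨hx, hy, hne⟩ := mem_offDiag.mp hxy
  exact ⟨x, hYX hx, y, hYX hy, hne, hce⟩
end

section
/- There is an absolute constant N_0 such that for all n ≥ N_0 the following holds: for every graph H on n vertices with independence number α = α(H) ≥ 1, there exists a partition of the edge set of H into two classes E_1 and E_2 such that every set of at least ⌈8·α·log n⌉ vertices of H contains an edge of E_1 and an edge of E_2. -/
open Finset

/-- If every independent set of `H` has size at most `α`, then any vertex set `X`
with `α * k ≤ |X|` spans at least `α * (k choose 2)` edges of `H`. -/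
lemma edge_lower {n : ℕ} (H : SimpleGraph (Fin n)) [Fintype H.edgeSet] (α : ℕ)
    (hα : ∀ S : Finset (Fin n), (∀ x ∈ S, ∀ y ∈ S, ¬ H.Adj x y) → S.card ≤ α) :
    ∀ (k : ℕ) (X : Finset (Fin n)), α * k ≤ X.card →
      α * k.choose 2 ≤ (H.edgeFinset.filter (· ∈ X.sym2)).card := by
  classical
  intro k
  induction k with
  | zero => intro X _; simp
  | succ k ih =>
    intro X hX
    have hne : ((X.powerset).filter (fun C => ∀ x ∈ C, ∀ y ∈ C, ¬ H.Adj x y)).Nonempty :=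
      ⟨∅, by simp⟩
    obtain ⟨C, hCmem, hCmax⟩ : ∃ C ∈ (X.powerset).filter (fun C => ∀ x ∈ C, ∀ y ∈ C, ¬ H.Adj x y),
        ∀ x ∈ (X.powerset).filter (fun C => ∀ x ∈ C, ∀ y ∈ C, ¬ H.Adj x y), ¬ C < x := by
      obtain ⟨C, hC⟩ := Finset.exists_maximal hne
      exact ⟨C, hC.1, fun x hx hlt => hlt.not_ge (hC.2 hx hlt.le)⟩
    rw [Finset.mem_filter, Finset.mem_powerset] at hCmem
    obtain ⟨hCX, hCind⟩ := hCmem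
    have hCcard : C.card ≤ α := hα C hCind
    set X' := X \ C with hX'def
    have hX'X : X' ⊆ X := Finset.sdiff_subset
    have hcs : X'.card = X.card - C.card := Finset.card_sdiff_of_subset hCX
    have hCle : C.card ≤ X.card := Finset.card_le_card hCX
    have hX'card : α * k ≤ X'.card := by
      have h1 : α * (k+1) = α * k + α := by ring
      omega
    have hnb : ∀ v, v ∈ X' → (∃ u, u ∈ C ∧ H.Adj v u) := by
      intro v hv
      have hvX : v ∈ X := hX'X hv
      have hvC : v ∉ C := (Finset.mem_sdiff.mp hv).2
      by_contra h
      push_neg at h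
      refine hCmax (insert v C) ?_ (Finset.ssubset_insert hvC)
      rw [Finset.mem_filter, Finset.mem_powerset]
      constructor
      · exact Finset.insert_subset hvX hCX
      · intro x hx y hy hadj
        rcases Finset.mem_insert.mp hx with hxv | hxC
        · rcases Finset.mem_insert.mp hy with hyv | hyC
          · subst hxv; subst hyv; exact H.irrefl hadj
          · subst hxv; exact h y hyC hadj
        · rcases Finset.mem_insert.mp hy with hyv | hyC
          · subst hyv; exact h x hxC hadj.symm
          · exact hCind x hxC y hyC hadj
    let f : Fin n → Fin n := fun v => if h : ∃ u, u ∈ C ∧ H.Adj v u then h.choose else v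
    have hf : ∀ v ∈ X', f v ∈ C ∧ H.Adj v (f v) := by
      intro v hv
      simp only [f, dif_pos (hnb v hv)]
      exact (hnb v hv).choose_spec
    set eX := H.edgeFinset.filter (· ∈ X.sym2) with heX
    set eX' := H.edgeFinset.filter (· ∈ X'.sym2) with heX'
    set M := X'.image (fun v => s(v, f v)) with hM
    have hMcard : M.card = X'.card := by
      apply Finset.card_image_of_injOn
      intro v hv w hw hvw
      rcases Sym2.eq_iff.mp hvw with ⟨h1, _⟩ | ⟨h1, h2⟩
      · exact h1
      · exact absurd (show v ∈ C from h1 ▸ (hf w hw).1) (Finset.mem_sdiff.mp hv).2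
    have hMsub : M ⊆ eX := by
      intro e he
      obtain ⟨v, hv, rfl⟩ := Finset.mem_image.mp he
      rw [heX, Finset.mem_filter]
      refine ⟨?_, ?_⟩
      · rw [SimpleGraph.mem_edgeFinset]; exact (hf v hv).2
      · exact Finset.mk_mem_sym2_iff.mpr ⟨hX'X hv, hCX (hf v hv).1⟩
    have hX'sub : eX' ⊆ eX := by
      intro e he
      rw [heX', Finset.mem_filter] at he
      rw [heX, Finset.mem_filter]
      exact ⟨he.1, Finset.sym2_mono hX'X he.2⟩
    have hdisj : Disjoint eX' M := by
      rw [Finset.disjoint_right]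
      intro e he
      obtain ⟨v, hv, rfl⟩ := Finset.mem_image.mp he
      rw [heX', Finset.mem_filter]
      rintro ⟨-, hmem⟩
      have : f v ∈ X' := (Finset.mk_mem_sym2_iff.mp hmem).2
      exact (Finset.mem_sdiff.mp this).2 (hf v hv).1
    have hunion : eX'.card + M.card ≤ eX.card := by
      rw [← Finset.card_union_of_disjoint hdisj]
      exact Finset.card_le_card (Finset.union_subset hX'sub hMsub)
    have hih := ih X' hX'card
    have hch : (k+1).choose 2 = k + k.choose 2 := by
      rw [Nat.choose_succ_succ, Nat.choose_one_right]
    calc α * (k+1).choose 2 = α * k + α * k.choose 2 := by rw [hch]; ring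
    _ ≤ X'.card + eX'.card := Nat.add_le_add hX'card hih
    _ = eX'.card + M.card := by rw [hMcard]; ring
    _ ≤ eX.card := hunion

/-- The number of subsets of `E` avoiding a fixed subset `eX` of `E`. -/
lemma count_avoid {β : Type*} [DecidableEq β] (E eX : Finset β) (h : eX ⊆ E) :
    ((E.powerset).filter (fun c => eX ∩ c = ∅)).card = 2 ^ (E.card - eX.card) := by
  have : (E.powerset).filter (fun c => eX ∩ c = ∅) = (E \ eX).powerset := by
    ext c
    simp only [Finset.mem_filter, Finset.mem_powerset, Finset.subset_sdiff]
    constructor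
    · rintro ⟨h1, h2⟩
      exact ⟨h1, Finset.disjoint_left.mpr (fun a hac haX =>
        Finset.eq_empty_iff_forall_notMem.mp h2 a (Finset.mem_inter.mpr ⟨haX, hac⟩))⟩
    · rintro ⟨h1, h2⟩
      refine ⟨h1, Finset.eq_empty_iff_forall_notMem.mpr fun a ha => ?_⟩
      rw [Finset.mem_inter] at ha
      exact (Finset.disjoint_right.mp h2) ha.1 ha.2
  rw [this, Finset.card_powerset, Finset.card_sdiff_of_subset h]

/-- The number of subsets of `E` containing a fixed subset `eX` of `E`. -/
lemma count_contain {β : Type*} [DecidableEq β] (E eX : Finset β) (h : eX ⊆ E) :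
    ((E.powerset).filter (fun c => eX ⊆ c)).card = 2 ^ (E.card - eX.card) := by
  have himg : (E.powerset).filter (fun c => eX ⊆ c) = (E \ eX).powerset.image (eX ∪ ·) := by
    ext c
    simp only [Finset.mem_filter, Finset.mem_powerset, Finset.mem_image]
    constructor
    · rintro ⟨h1, h2⟩
      refine ⟨c \ eX, Finset.sdiff_subset_sdiff h1 le_rfl, ?_⟩
      rw [Finset.union_sdiff_of_subset h2]
    · rintro ⟨d, hd, rfl⟩
      rw [Finset.subset_sdiff] at hd
      exact ⟨Finset.union_subset h (hd.1), Finset.subset_union_left⟩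
  rw [himg, Finset.card_image_of_injOn, Finset.card_powerset, Finset.card_sdiff_of_subset h]
  intro d1 h1 d2 h2 heq
  rw [Finset.mem_coe, Finset.mem_powerset, Finset.subset_sdiff] at h1 h2
  have e1 : (eX ∪ d1) \ eX = d1 := Finset.union_sdiff_cancel_left (h1.2.symm)
  have e2 : (eX ∪ d2) \ eX = d2 := Finset.union_sdiff_cancel_left (h2.2.symm)
  rw [← e1, ← e2]; exact congrArg (· \ eX) heq

lemma numeric_key (n α b t k : ℕ) (hα : 1 ≤ α) (hb : 2 ≤ b) (hn : n ≤ 2^(b+1))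
    (ht : t ≤ 8*α*(b+1)) (hk : 8*b ≤ k) :
    2 * n.choose t < 2 ^ (α * k.choose 2) := by
  have hch : (8*b).choose 2 = 4*b*(8*b-1) := by
    rw [Nat.choose_two_right]
    generalize hd : 8*b - 1 = d
    have h8 : 8*b = d + 1 := by omega
    rw [h8]
    have : (d+1)*d = (4*b*d)*2 := by
      have : d + 1 = 8 * b := h8.symm
      nlinarith
    rw [this, Nat.mul_div_cancel _ (by norm_num : (0:ℕ) < 2)]
  have hexp : 1 + (b+1)*t < α * (8*b).choose 2 := by
    rw [hch]
    generalize hd : 8*b - 1 = d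
    have h8 : 8*b = d + 1 := by omega
    have h1 : (b+1)*t ≤ (b+1)*(8*α*(b+1)) := Nat.mul_le_mul_left _ ht
    nlinarith [h1, hα, hb, h8]
  calc 2 * n.choose t ≤ 2 * n^t := Nat.mul_le_mul_left _ (Nat.choose_le_pow n t)
  _ ≤ 2 * (2^(b+1))^t := Nat.mul_le_mul_left _ (Nat.pow_le_pow_left hn t)
  _ = 2^(1 + (b+1)*t) := by rw [← pow_mul]; ring
  _ < 2^(α * (8*b).choose 2) := Nat.pow_lt_pow_right (by norm_num) hexp
  _ ≤ 2^(α * k.choose 2) :=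
      Nat.pow_le_pow_right (by norm_num) (Nat.mul_le_mul_left _ (Nat.choose_le_choose 2 hk))

lemma sym2_extract {V : Type*} (S : Set (Sym2 V)) (X : Finset V) (e : Sym2 V)
    (he : e ∈ X.sym2) (hS : e ∈ S) : ∃ x ∈ X, ∃ y ∈ X, s(x,y) ∈ S := by
  induction e using Sym2.ind with
  | _ x y =>
    exact ⟨x, (Finset.mk_mem_sym2_iff.mp he).1, y, (Finset.mk_mem_sym2_iff.mp he).2, hS⟩

/-- The independence number of a graph `H` on `Fin n`: the maximum size of a
set of vertices spanning no edges of `H`. -/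
noncomputable def indepNum {n : ℕ} (H : SimpleGraph (Fin n)) : ℕ :=
  sSup {m | ∃ X : Finset (Fin n), (∀ x ∈ X, ∀ y ∈ X, ¬ H.Adj x y) ∧ X.card = m}

theorem stmt14 :
    ∃ N₀ : ℕ, ∀ n : ℕ, N₀ ≤ n → ∀ H : SimpleGraph (Fin n), 1 ≤ indepNum H →
      ∃ E₁ E₂ : Set (Sym2 (Fin n)), E₁ ∪ E₂ = H.edgeSet ∧ E₁ ∩ E₂ = ∅ ∧
        ∀ X : Finset (Fin n),
          8 * (indepNum H : ℝ) * Real.logb 2 n ≤ (X.card : ℝ) →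
            (∃ x ∈ X, ∃ y ∈ X, s(x, y) ∈ E₁) ∧ (∃ x ∈ X, ∃ y ∈ X, s(x, y) ∈ E₂) := by
  classical
  refine ⟨4, fun n hn H hα1 => ?_⟩
  set α := indepNum H with hαdef
  -- every independent set has size at most α
  have hbdd : ∀ S : Finset (Fin n), (∀ x ∈ S, ∀ y ∈ S, ¬ H.Adj x y) → S.card ≤ α := by
    intro S hS
    apply le_csSup
    · refine ⟨n, ?_⟩
      rintro m ⟨X, -, rfl⟩
      exact (Finset.card_le_univ X).trans_eq (by simp)
    · exact ⟨S, hS, rfl⟩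
  -- logarithm bookkeeping
  set b := ⌊Real.logb 2 n⌋₊ with hbdef
  have hn4 : (4:ℝ) ≤ (n:ℝ) := by exact_mod_cast hn
  have hn0 : (0:ℝ) < n := by linarith
  have hb2 : 2 ≤ b := by
    have h2 : (2:ℝ) ≤ Real.logb 2 n := by
      have h1 : Real.logb 2 4 = 2 := by
        rw [show (4:ℝ) = 2^(2:ℕ) by norm_num, Real.logb_pow, Real.logb_self_eq_one] <;> norm_num
      have h2 := Real.logb_le_logb_of_le (show (1:ℝ) < 2 by norm_num)
        (show (0:ℝ) < 4 by norm_num) hn4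
      linarith
    exact Nat.le_floor (by exact_mod_cast h2)
  have hlog_lt : Real.logb 2 n < b + 1 := Nat.lt_floor_add_one _
  have hlog_ge : (b:ℝ) ≤ Real.logb 2 n := Nat.floor_le (Real.logb_nonneg (by norm_num)
    (by linarith))
  have hn2b : n ≤ 2^(b+1) := by
    have h2 : (n:ℝ) < (2:ℝ) ^ ((b:ℝ) + 1) :=
      (Real.logb_lt_iff_lt_rpow (by norm_num) hn0).mp hlog_lt
    have h3 : (2:ℝ) ^ ((b:ℝ) + 1) = ((2^(b+1) : ℕ) : ℝ) := by
      rw [show ((b:ℝ) + 1) = ((b+1 : ℕ) : ℝ) by push_cast; ring, Real.rpow_natCast]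
      push_cast; ring
    rw [h3] at h2
    exact_mod_cast h2.le
  have hαpos : 0 < α := hα1
  have hαR : (1:ℝ) ≤ (α:ℝ) := by exact_mod_cast hα1
  set t := ⌈8 * (α:ℝ) * Real.logb 2 n⌉₊ with htdef
  set k := t / α with hkdef
  have ht_le : t ≤ 8*α*(b+1) := by
    apply Nat.ceil_le.mpr
    push_cast
    nlinarith [hlog_lt, hαR]
  have ht_ge : 8*α*b ≤ t := by
    have h1 : ((8*α*b : ℕ):ℝ) ≤ 8 * (α:ℝ) * Real.logb 2 n := by
      push_cast
      nlinarith [hlog_ge, hαR]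
    have h2 : ((8*α*b : ℕ):ℝ) ≤ (t:ℝ) := h1.trans (Nat.le_ceil _)
    exact Nat.cast_le.mp h2
  have hk8 : 8*b ≤ k := by
    rw [hkdef, Nat.le_div_iff_mul_le hαpos]
    calc 8*b*α = 8*α*b := by ring
    _ ≤ t := ht_ge
  have hαk : α * k ≤ t := by
    rw [hkdef]
    calc α * (t / α) = (t / α) * α := by ring
    _ ≤ t := Nat.div_mul_le_self t α
  set L := α * k.choose 2 with hLdef
  set E := H.edgeFinset with hEdef
  set P := Finset.powersetCard t (Finset.univ : Finset (Fin n)) with hPdef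
  -- the per-set edge bound
  have hedge : ∀ X ∈ P, L ≤ (E.filter (· ∈ X.sym2)).card := by
    intro X hX
    have hXcard : X.card = t := (Finset.mem_powersetCard.mp hX).2
    exact edge_lower H α hbdd k X (le_trans hαk hXcard.ge)
  set Bad := E.powerset.filter
    (fun c => ∃ X ∈ P, (E.filter (· ∈ X.sym2)) ∩ c = ∅ ∨ (E.filter (· ∈ X.sym2)) ⊆ c)
    with hBaddef
  have hBadsub : Bad ⊆ P.biUnion (fun X => E.powerset.filter
      (fun c => (E.filter (· ∈ X.sym2)) ∩ c = ∅ ∨ (E.filter (· ∈ X.sym2)) ⊆ c)) := by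
    intro c hc
    rw [hBaddef, Finset.mem_filter] at hc
    obtain ⟨hcP, X, hXP, hprop⟩ := hc
    exact Finset.mem_biUnion.mpr ⟨X, hXP, Finset.mem_filter.mpr ⟨hcP, hprop⟩⟩
  have hband : ∀ X ∈ P, (E.powerset.filter
      (fun c => (E.filter (· ∈ X.sym2)) ∩ c = ∅ ∨ (E.filter (· ∈ X.sym2)) ⊆ c)).card
      ≤ 2 * 2^(E.card - L) := by
    intro X hX
    set eX := E.filter (· ∈ X.sym2) with heXdef
    have hsub : eX ⊆ E := Finset.filter_subset _ _
    have heL : L ≤ eX.card := hedge X hX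
    have hsplit : E.powerset.filter (fun c => eX ∩ c = ∅ ∨ eX ⊆ c)
        ⊆ E.powerset.filter (fun c => eX ∩ c = ∅) ∪ E.powerset.filter (fun c => eX ⊆ c) := by
      intro c hc
      rw [Finset.mem_filter] at hc
      rcases hc.2 with h | h
      · exact Finset.mem_union_left _ (Finset.mem_filter.mpr ⟨hc.1, h⟩)
      · exact Finset.mem_union_right _ (Finset.mem_filter.mpr ⟨hc.1, h⟩)
    calc (E.powerset.filter (fun c => eX ∩ c = ∅ ∨ eX ⊆ c)).card
        ≤ (E.powerset.filter (fun c => eX ∩ c = ∅) ∪ E.powerset.filter (fun c => eX ⊆ c)).card :=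
          Finset.card_le_card hsplit
    _ ≤ (E.powerset.filter (fun c => eX ∩ c = ∅)).card
        + (E.powerset.filter (fun c => eX ⊆ c)).card := Finset.card_union_le _ _
    _ = 2^(E.card - eX.card) + 2^(E.card - eX.card) := by
        rw [count_avoid E eX hsub, count_contain E eX hsub]
    _ = 2 * 2^(E.card - eX.card) := by ring
    _ ≤ 2 * 2^(E.card - L) :=
        Nat.mul_le_mul_left _ (Nat.pow_le_pow_right (by norm_num)
          (Nat.sub_le_sub_left heL _))
  have hcard : Bad.card < 2^E.card := by
    rcases P.eq_empty_or_nonempty with hP | hP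
    · have : Bad.card = 0 := by
        have : Bad ⊆ ∅ := by rw [hP] at hBadsub; simpa using hBadsub
        simpa using Finset.card_le_card this
      rw [this]
      exact Nat.pow_pos (by norm_num)
    · obtain ⟨X₀, hX₀⟩ := hP
      have hLE : L ≤ E.card :=
        le_trans (hedge X₀ hX₀) (Finset.card_le_card (Finset.filter_subset _ _))
      have hPcard : P.card = n.choose t := by
        rw [hPdef, Finset.card_powersetCard, Finset.card_univ, Fintype.card_fin]
      calc Bad.card ≤ (P.biUnion _).card := Finset.card_le_card hBadsub
      _ ≤ ∑ X ∈ P, (E.powerset.filter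
          (fun c => (E.filter (· ∈ X.sym2)) ∩ c = ∅ ∨ (E.filter (· ∈ X.sym2)) ⊆ c)).card :=
          Finset.card_biUnion_le
      _ ≤ ∑ _X ∈ P, 2 * 2^(E.card - L) := Finset.sum_le_sum hband
      _ = n.choose t * (2 * 2^(E.card - L)) := by rw [Finset.sum_const, hPcard, smul_eq_mul]
      _ = (2 * n.choose t) * 2^(E.card - L) := by ring
      _ < 2^L * 2^(E.card - L) := by
          exact Nat.mul_lt_mul_of_lt_of_le (numeric_key n α b t k hα1 hb2 hn2b ht_le hk8)
            le_rfl (Nat.pow_pos (by norm_num))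
      _ = 2^E.card := by rw [← pow_add, Nat.add_sub_cancel' hLE]
  -- choose a good coloring
  have hgoodex : (E.powerset \ Bad).Nonempty := by
    apply Finset.card_pos.mp
    have hBP : Bad ⊆ E.powerset := Finset.filter_subset _ _
    have h1 : (E.powerset \ Bad).card = E.powerset.card - Bad.card := Finset.card_sdiff_of_subset hBP
    rw [h1, Finset.card_powerset]
    omega
  obtain ⟨c, hc⟩ := hgoodex
  rw [Finset.mem_sdiff] at hc
  obtain ⟨hcPow, hcBad⟩ := hc
  rw [Finset.mem_powerset] at hcPow
  have hgood : ∀ X ∈ P, ¬((E.filter (· ∈ X.sym2)) ∩ c = ∅ ∨ (E.filter (· ∈ X.sym2)) ⊆ c) := by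
    intro X hX h
    exact hcBad (Finset.mem_filter.mpr ⟨Finset.mem_powerset.mpr hcPow, ⟨X, hX, h⟩⟩)
  refine ⟨(c : Set (Sym2 (Fin n))), ((E \ c : Finset (Sym2 (Fin n))) : Set (Sym2 (Fin n))),
    ?_, ?_, ?_⟩
  · rw [← Finset.coe_union, Finset.union_sdiff_of_subset hcPow, hEdef,
      SimpleGraph.coe_edgeFinset]
  · rw [← Finset.coe_inter, Finset.inter_sdiff_self, Finset.coe_empty]
  · intro X hXcard
    have htX : t ≤ X.card := Nat.ceil_le.mpr hXcard
    obtain ⟨Y, hYX, hYcard⟩ := Finset.exists_subset_card_eq htX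
    have hYP : Y ∈ P := Finset.mem_powersetCard.mpr ⟨Finset.subset_univ Y, hYcard⟩
    have h := hgood Y hYP
    push_neg at h
    obtain ⟨h1, h2⟩ := h
    constructor
    · obtain ⟨e, he⟩ := h1
      rw [Finset.mem_inter, Finset.mem_filter] at he
      obtain ⟨⟨heE, heY⟩, hec⟩ := he
      exact sym2_extract _ X e (Finset.sym2_mono hYX heY) (Finset.mem_coe.mpr hec)
    · obtain ⟨e, heY', hec⟩ := Finset.not_subset.mp h2
      rw [Finset.mem_filter] at heY'
      obtain ⟨heE, heY⟩ := heY'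
      refine sym2_extract _ X e (Finset.sym2_mono hYX heY) ?_
      rw [Finset.mem_coe, Finset.mem_sdiff]
      exact ⟨heE, hec⟩
end

section
/- Let s ≥ 2 be an integer and ξ ∈ (0,1). For all sufficiently large n the following holds: if c'' is an s-edge-colouring of K_n and h is an integer with h ≥ (log n)^{2/ξ} such that every h-element subset of {1,…,n} contains, for each colour i ∈ {1,…,s}, a pair coloured i under c'', then there exists an (s+1)-edge-colouring c''' of K_n satisfying c'''(e) ∈ {c''(e), s+1} for every pair e, such that every subset of {1,…,n} of size at least ⌈h^{1+ξ}⌉ contains, for each colour i ∈ {1,…,s+1}, a pair coloured i under c'''. -/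
/-!
Recolour to the new colour `s + 1` the edges of a random set `M` containing each edge with
probability `p = 1 / (64 h)`, and put `m = ⌈h ^ (1 + ξ)⌉`. A fixed `m`-set has `m (m - 1) / 2`
edges, so `M` misses all of them with probability about `exp (-p m² / 2)` and (exponential
moment) hits at least `m² / (16 h)` of them with probability about `exp (-3 m² / (64 h))`.
Since `m ≥ h (log n) ^ 2`, both are at most `n ^ (-m) / e`, and a union bound over the
`n.choose m` sets of size `m` yields an `M` meeting every `m`-set, but in fewer than
`m² / (16 h)` edges. In such an `m`-set, discarding the vertices of high `M`-degree and then
choosing greedily leaves `h` vertices spanning no edge of `M`; there the old colouring shows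
all `s` old colours.
-/

open Finset Real

section IndependentSubset

variable {α : Type*} [DecidableEq α] (r : α → α → Prop) [DecidableRel r]

theorem exists_subset_forall_degree_lt (d : ℕ) (V : Finset α) :
    ∃ W ⊆ V, d * (#V - #W) ≤ ∑ x ∈ V, #{y ∈ V | r x y} ∧ ∀ x ∈ W, #{y ∈ W | r x y} < d := by
  induction V using Finset.strongInduction with
  | H V ih =>
  by_cases hlow : ∀ x ∈ V, #{y ∈ V | r x y} < d
  · exact ⟨V, subset_rfl, by simp, hlow⟩
  push Not at hlow
  obtain ⟨x, hx, hdx⟩ := hlow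
  obtain ⟨W, hWV, hsum, hW⟩ := ih (V.erase x) (erase_ssubset hx)
  refine ⟨W, hWV.trans (erase_subset x V), ?_, hW⟩
  have hmono : ∑ y ∈ V.erase x, #{z ∈ V.erase x | r y z} ≤ ∑ y ∈ V.erase x, #{z ∈ V | r y z} :=
    sum_le_sum fun y _ => card_le_card (filter_subset_filter _ (erase_subset x V))
  have hcard : #V - #W = #(V.erase x) - #W + 1 := by
    have := card_le_card hWV
    have := card_erase_add_one hx
    omega
  rw [← add_sum_erase V _ hx, hcard, mul_add_one]
  omega

theorem exists_subset_pairwise_not_rel [Std.Symm r] (d : ℕ) (V : Finset α)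
    (hV : ∀ x ∈ V, #{y ∈ V | r x y} < d) :
    ∃ Y ⊆ V, #V ≤ d * #Y ∧ (Y : Set α).Pairwise fun x y => ¬ r x y := by
  induction V using Finset.strongInduction with
  | H V ih =>
  obtain rfl | ⟨x, hx⟩ := V.eq_empty_or_nonempty
  · exact ⟨∅, by simp⟩
  set U := {y ∈ V.erase x | ¬ r x y}
  have hUV : U ⊆ V := (filter_subset _ _).trans (erase_subset x V)
  have hxU : x ∉ U := by simp [U]
  obtain ⟨Y, hYU, hcard, hY⟩ := ih U (ssubset_of_subset_of_ne hUV fun h => hxU (h ▸ hx))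
    fun y hy => (card_le_card (filter_subset_filter _ hUV)).trans_lt (hV y (hUV hy))
  refine ⟨insert x Y, insert_subset hx (hYU.trans hUV), ?_, ?_⟩
  · have hcover : V ⊆ insert x (U ∪ {y ∈ V | r x y}) := by
      intro y hy
      by_cases hyx : y = x
      · simp [hyx]
      · by_cases hxy : r x y <;> simp [U, hy, hyx, hxy]
    have := (card_le_card hcover).trans ((card_insert_le _ _).trans
      (Nat.add_le_add_right (card_union_le U _) 1))
    have := hV x hx
    rw [card_insert_of_notMem fun h => hxU (hYU h), mul_add_one]
    omega
  · rw [coe_insert, Set.pairwise_insert]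
    refine ⟨hY, fun y hy _ => ?_⟩
    have hxy := (mem_filter.1 (hYU hy)).2
    exact ⟨hxy, fun hyx => hxy (symm_of r hyx)⟩

theorem exists_subset_pairwise_not_rel_of_sum_degree [Std.Symm r] (d : ℕ)
    (V : Finset α) :
    ∃ Y ⊆ V, d * #V ≤ ∑ x ∈ V, #{y ∈ V | r x y} + d * (d * #Y) ∧
      (Y : Set α).Pairwise fun x y => ¬ r x y := by
  obtain ⟨W, hWV, hsum, hW⟩ := exists_subset_forall_degree_lt r d V
  obtain ⟨Y, hYW, hcard, hY⟩ := exists_subset_pairwise_not_rel r d W hW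
  refine ⟨Y, hYW.trans hWV, ?_, hY⟩
  have hsplit : d * #V = d * (#V - #W) + d * #W := by
    rw [← mul_add, Nat.sub_add_cancel (card_le_card hWV)]
  have := Nat.mul_le_mul_left d hcard
  omega

end IndependentSubset

def edges {α : Type*} [DecidableEq α] (X : Finset α) : Finset (Sym2 α) :=
  X.offDiag.image Sym2.mk.uncurry

theorem card_filter_sym2Mk_eq_le_two {α : Type*} [DecidableEq α] (T : Finset (α × α))
    (e : Sym2 α) : #{q ∈ T | Sym2.mk.uncurry q = e} ≤ 2 := by
  induction e using Sym2.ind with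
  | h a b =>
  refine (card_le_card fun q hq => ?_).trans (card_le_two (a := (a, b)) (b := (b, a)))
  obtain ⟨q₁, q₂⟩ := q
  rcases Sym2.eq_iff.1 (mem_filter.1 hq).2 with ⟨rfl, rfl⟩ | ⟨rfl, rfl⟩ <;> simp

theorem sum_card_filter_ne_mem_le_two_mul {α : Type*} [DecidableEq α] (X : Finset α)
    (M : Finset (Sym2 α)) :
    ∑ x ∈ X, #{y ∈ X | x ≠ y ∧ s(x, y) ∈ M} ≤ 2 * #(edges X ∩ M) := by
  set T := {q ∈ X.offDiag | Sym2.mk.uncurry q ∈ M}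
  have hT : ∑ x ∈ X, #{y ∈ X | x ≠ y ∧ s(x, y) ∈ M} = #T := by
    have : T = {q ∈ X ×ˢ X | q.1 ≠ q.2 ∧ s(q.1, q.2) ∈ M} := by
      ext ⟨a, b⟩; simp [T, and_assoc]
    rw [this, card_filter, sum_product]
    simp only [card_filter]
  have himage : T.image Sym2.mk.uncurry = edges X ∩ M := by
    rw [edges, ← filter_mem_eq_inter, filter_image]
  rw [hT, ← himage]
  exact card_le_mul_card_image T 2 fun e _ => card_filter_sym2Mk_eq_le_two T e

theorem exists_subset_card_eq_forall_sym2_notMem {α : Type*} [DecidableEq α] (X : Finset α)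
    (M : Finset (Sym2 α)) {h : ℕ} (hh : 0 < h) (hX : 4 * h ≤ #X)
    (hM : 16 * h * #(edges X ∩ M) < #X * #X) :
    ∃ Y ⊆ X, #Y = h ∧ ∀ x ∈ Y, ∀ y ∈ Y, x ≠ y → s(x, y) ∉ M := by
  let r : α → α → Prop := fun x y => x ≠ y ∧ s(x, y) ∈ M
  have : Std.Symm r := ⟨fun x y hxy => ⟨hxy.1.symm, Sym2.eq_swap ▸ hxy.2⟩⟩
  set d := #X / (2 * h)
  obtain ⟨Y, hYX, hdeg, hY⟩ := exists_subset_pairwise_not_rel_of_sum_degree r d X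
  have hsum := sum_card_filter_ne_mem_le_two_mul X M
  have hd_le : 2 * h * d ≤ #X := Nat.mul_div_le _ _
  have hd_gt : #X < 2 * h * (d + 1) := Nat.lt_mul_div_succ _ (by omega)
  have hYh : h ≤ #Y := by
    by_contra! hlt
    have h4d : #X < 4 * h * d := by nlinarith
    have hc : 4 * #(edges X ∩ M) < d * #X := by
      refine Nat.lt_of_mul_lt_mul_left (a := 4 * h) ?_
      nlinarith
    have hdd : d * d * (#Y + 1) ≤ d * d * h := Nat.mul_le_mul_left _ hlt
    nlinarith
  obtain ⟨Z, hZY, hZ⟩ := exists_subset_card_eq hYh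
  exact ⟨Z, hZY.trans hYX, hZ, fun x hx y hy hxy hxyM => hY (hZY hx) (hZY hy) hxy ⟨hxy, hxyM⟩⟩

section RandomColouring

variable {α β : Type*} [Fintype α] [DecidableEq α] [Fintype β] [DecidableEq β]

/-- With `t = 0` this counts the colourings avoiding `b` on `S`; with `t = e` it is the
exponential moment behind the tail bound for the number of `b`-coloured elements of `S`. -/
theorem sum_prod_ite_eq_pow (S : Finset α) (b : β) (t : ℝ) :
    ∑ ω : α → β, ∏ e ∈ S, (if ω e = b then t else 1) =
      ((Fintype.card β : ℝ) - 1 + t) ^ #S * (Fintype.card β : ℝ) ^ (Fintype.card α - #S) := by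
  let f : α → β → ℝ := fun e c => if e ∈ S then (if c = b then t else 1) else 1
  have hfibre (e : α) : ∑ c, f e c =
      if e ∈ S then (Fintype.card β : ℝ) - 1 + t else Fintype.card β := by
    have : (1 : ℕ) ≤ Fintype.card β := Fintype.card_pos_iff.2 ⟨b⟩
    split_ifs <;> simp [f, *, sum_ite, filter_ne', filter_eq']
    ring
  calc ∑ ω : α → β, ∏ e ∈ S, (if ω e = b then t else 1)
      = ∑ ω : α → β, ∏ e, f e (ω e) := by simp only [f, Fintype.prod_ite_mem]
    _ = ∏ e, ∑ c, f e c := (Fintype.prod_sum f).symm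
    _ = _ := by simp [hfibre, prod_ite, filter_notMem_eq_sdiff, card_univ_sdiff]

theorem pow_mul_pow_sub_le_mul_exp {K a c : ℝ} (hK : 0 ≤ K) (ha₀ : 0 ≤ a) (ha : a ≤ K * exp c)
    {E N : ℕ} (hEN : E ≤ N) : a ^ E * K ^ (N - E) ≤ K ^ N * exp (c * E) := by
  calc a ^ E * K ^ (N - E) ≤ (K * exp c) ^ E * K ^ (N - E) := by gcongr
    _ = K ^ N * exp (c * E) := by
      rw [mul_pow, mul_comm c, exp_nat_mul, mul_right_comm, ← pow_add, Nat.add_sub_cancel' hEN]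

theorem card_filter_forall_ne_le (S : Finset α) (b : β) :
    (#{ω : α → β | ∀ e ∈ S, ω e ≠ b} : ℝ) ≤
      (Fintype.card β : ℝ) ^ Fintype.card α * exp (-#S / Fintype.card β) := by
  have hK : (1 : ℝ) ≤ Fintype.card β := by exact_mod_cast Fintype.card_pos_iff.2 ⟨b⟩
  have hcount := sum_prod_ite_eq_pow S b 0
  have hbool (ω : α → β) : ∏ e ∈ S, (if ω e = b then (0 : ℝ) else 1) =
      if ∀ e ∈ S, ω e ≠ b then 1 else 0 := by
    rw [prod_congr rfl fun e _ => (ite_not _ _ _).symm]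
    convert prod_boole
  simp only [hbool, sum_boole] at hcount
  rw [hcount, add_zero]
  refine (pow_mul_pow_sub_le_mul_exp (c := -(1 / Fintype.card β)) (by linarith) (by linarith) ?_
    (card_le_univ S)).trans_eq (by ring_nf)
  calc (Fintype.card β : ℝ) - 1 = Fintype.card β * (1 - 1 / Fintype.card β) := by
        field_simp
    _ ≤ _ := by gcongr; exact one_sub_le_exp_neg _

theorem card_filter_le_card_filter_eq_le (S : Finset α) (b : β) (z : ℕ) :
    (#{ω : α → β | z ≤ #{e ∈ S | ω e = b}} : ℝ) ≤
      (Fintype.card β : ℝ) ^ Fintype.card α * exp (2 * #S / Fintype.card β - z) := by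
  have hK : (0 : ℝ) < Fintype.card β := by exact_mod_cast Fintype.card_pos_iff.2 ⟨b⟩
  have hweight (ω : α → β) (hω : z ≤ #{e ∈ S | ω e = b}) :
      exp z ≤ ∏ e ∈ S, (if ω e = b then exp 1 else 1) := by
    rw [prod_ite, prod_const, prod_const_one, mul_one, exp_one_pow]
    exact exp_le_exp.2 (by exact_mod_cast hω)
  have hbase : (Fintype.card β : ℝ) - 1 + exp 1 ≤ Fintype.card β * exp (2 / Fintype.card β) := by
    have := add_one_le_exp (2 / Fintype.card β)
    have := exp_one_lt_d9
    calc (Fintype.card β : ℝ) - 1 + exp 1 ≤ Fintype.card β * (2 / Fintype.card β + 1) := by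
          rw [mul_add, mul_div_cancel₀ _ hK.ne']; linarith
      _ ≤ _ := by gcongr
  calc (#{ω : α → β | z ≤ #{e ∈ S | ω e = b}} : ℝ)
      = (∑ ω ∈ {ω : α → β | z ≤ #{e ∈ S | ω e = b}}, exp z) / exp z := by
        rw [sum_const, nsmul_eq_mul, mul_div_cancel_right₀ _ (exp_pos _).ne']
    _ ≤ (∑ ω : α → β, ∏ e ∈ S, (if ω e = b then exp 1 else 1)) / exp z := by
        gcongr
        refine (sum_le_sum fun ω hω => hweight ω (mem_filter.1 hω).2).trans
          (sum_le_sum_of_subset_of_nonneg (subset_univ _) fun ω _ _ => prod_nonneg fun e _ => ?_)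
        split_ifs <;> positivity
    _ ≤ (Fintype.card β : ℝ) ^ Fintype.card α * exp (2 / Fintype.card β * #S) / exp z := by
        rw [sum_prod_ite_eq_pow]
        gcongr ?_ / _
        exact pow_mul_pow_sub_le_mul_exp hK.le (by linarith [add_one_le_exp 1]) hbase
          (card_le_univ S)
    _ = _ := by rw [exp_sub, mul_div_assoc, div_mul_eq_mul_div]

theorem exists_forall_exists_eq_and_card_filter_eq_lt {ι : Type*} (F : Finset ι)
    (S : ι → Finset α) (b : β) (z : ℕ)
    (hF : ∑ i ∈ F, (exp (-#(S i) / Fintype.card β) + exp (2 * #(S i) / Fintype.card β - z)) < 1) :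
    ∃ ω : α → β, ∀ i ∈ F, (∃ e ∈ S i, ω e = b) ∧ #{e ∈ S i | ω e = b} < z := by
  by_contra! hbad
  set A := fun i => ({ω : α → β | ∀ e ∈ S i, ω e ≠ b} : Finset (α → β))
  set B := fun i => ({ω : α → β | z ≤ #{e ∈ S i | ω e = b}} : Finset (α → β))
  have hcover : (univ : Finset (α → β)) ⊆ F.biUnion fun i => A i ∪ B i := by
    intro ω _
    obtain ⟨i, hi, hω⟩ := hbad ω
    refine mem_biUnion.2 ⟨i, hi, ?_⟩
    by_cases hhit : ∃ e ∈ S i, ω e = b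
    · exact mem_union_right _ ((mem_filter_univ _).2 (hω hhit))
    · exact mem_union_left _ ((mem_filter_univ _).2 fun e he hωe => hhit ⟨e, he, hωe⟩)
  have hpos : (0 : ℝ) < Fintype.card β ^ Fintype.card α := by
    have : 0 < Fintype.card β := Fintype.card_pos_iff.2 ⟨b⟩
    positivity
  have hle : (Fintype.card β : ℝ) ^ Fintype.card α ≤ Fintype.card β ^ Fintype.card α *
      ∑ i ∈ F, (exp (-#(S i) / Fintype.card β) + exp (2 * #(S i) / Fintype.card β - z)) := by
    calc (Fintype.card β : ℝ) ^ Fintype.card α = #(univ : Finset (α → β)) := by simp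
      _ ≤ ∑ i ∈ F, ((#(A i) : ℝ) + #(B i)) := by
        norm_cast
        exact (card_le_card hcover).trans (card_biUnion_le.trans
          (sum_le_sum fun i _ => card_union_le _ _))
      _ ≤ _ := by
        rw [mul_sum]
        exact sum_le_sum fun i _ => (add_le_add (card_filter_forall_ne_le (S i) b)
          (card_filter_le_card_filter_eq_le (S i) b z)).trans_eq (mul_add _ _ _).symm
  nlinarith

end RandomColouring

theorem exp_neg_add_exp_sub_le {L h m E z : ℝ} (hL : 130 ≤ L) (hh : 1 ≤ h) (hm : h * L ^ 2 ≤ m)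
    (hE : E = m * (m - 1) / 2) (hz : m * m < 16 * h * (z + 1)) :
    exp (-E / (64 * h)) + exp (2 * E / (64 * h) - z) ≤ 2 * exp (-1) * exp (-(m * L)) := by
  have hhL : 130 * h * L ≤ m := by
    have : 130 * (h * L) ≤ L * (h * L) := mul_le_mul_of_nonneg_right hL (by positivity)
    nlinarith
  have hm0 : 0 ≤ m := by nlinarith
  have hsq : 130 * h * L * m ≤ m * m := mul_le_mul_of_nonneg_right hhL hm0
  have hhLm : m ≤ h * L * m := le_mul_of_one_le_left hm0 (by nlinarith)
  have hA : -E / (64 * h) ≤ -1 + -(m * L) := by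
    rw [div_le_iff₀ (by positivity), hE]
    nlinarith
  have hB : 2 * E / (64 * h) - z ≤ -1 + -(m * L) := by
    have hz' : m * m / (16 * h) - 1 < z := by
      rw [sub_lt_iff_lt_add, div_lt_iff₀ (by positivity)]
      linarith
    have : 2 * E / (64 * h) - m * m / (16 * h) ≤ -(m * L) - 2 := by
      have hsplit : 2 * E / (64 * h) - m * m / (16 * h) = -(3 * (m * m) + m) / (64 * h) := by
        rw [hE]; field_simp; ring
      rw [hsplit, div_le_iff₀ (by positivity)]
      nlinarith
    linarith
  rw [show 2 * exp (-1) * exp (-(m * L)) = exp (-1 + -(m * L)) + exp (-1 + -(m * L)) by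
    rw [exp_add]; ring]
  exact add_le_add (exp_le_exp.2 hA) (exp_le_exp.2 hB)

theorem log_sq_le_rpow {ξ x y : ℝ} (hξ : 0 < ξ) (hx : 1 ≤ x) (hy : logb 2 x ^ (2 / ξ) ≤ y) :
    log x ^ 2 ≤ y ^ ξ := by
  have hlog : 0 ≤ log x := log_nonneg hx
  have hlogb : log x ≤ logb 2 x := by
    rw [logb, le_div_iff₀ (log_pos one_lt_two)]
    nlinarith [log_two_lt_d9]
  calc log x ^ 2 ≤ logb 2 x ^ 2 := by gcongr
    _ = (logb 2 x ^ (2 / ξ)) ^ ξ := by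
      rw [← rpow_mul (hlog.trans hlogb), div_mul_cancel₀ _ hξ.ne', rpow_two]
    _ ≤ y ^ ξ := by gcongr; exact rpow_nonneg (hlog.trans hlogb) _

def recolour {V : Type*} [DecidableEq V] {s : ℕ} (c : Sym2 V → Fin s) (M : Finset (Sym2 V))
    (e : Sym2 V) : Fin (s + 1) :=
  if e ∈ M then Fin.last s else (c e).castSucc

theorem exists_recolour_eq {V : Type*} [DecidableEq V] {s h m : ℕ} (c : Sym2 V → Fin s)
    (M : Finset (Sym2 V))
    (hc : ∀ X : Finset V, #X = h → ∀ i : Fin s, ∃ x ∈ X, ∃ y ∈ X, x ≠ y ∧ c s(x, y) = i)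
    (hh : 0 < h) (hm : 4 * h ≤ m)
    (hM : ∀ X : Finset V, #X = m → (edges X ∩ M).Nonempty ∧
      16 * h * #(edges X ∩ M) < m * m)
    (X : Finset V) (hX : m ≤ #X) (i : Fin (s + 1)) :
    ∃ x ∈ X, ∃ y ∈ X, x ≠ y ∧ recolour c M s(x, y) = i := by
  obtain ⟨X', hX'X, hX'⟩ := exists_subset_card_eq hX
  obtain ⟨⟨e, he⟩, hfew⟩ := hM X' hX'
  induction i using Fin.lastCases with
  | last =>
    obtain ⟨he, heM⟩ := mem_inter.1 he
    obtain ⟨⟨x, y⟩, hxy, rfl⟩ := mem_image.1 he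
    obtain ⟨hx, hy, hne⟩ := mem_offDiag.1 hxy
    exact ⟨x, hX'X hx, y, hX'X hy, hne, if_pos heM⟩
  | cast j =>
    obtain ⟨Y, hYX, hY, hYM⟩ :=
      exists_subset_card_eq_forall_sym2_notMem X' M hh (hX' ▸ hm) (hX' ▸ hfew)
    obtain ⟨x, hx, y, hy, hne, hxy⟩ := hc Y hY j
    exact ⟨x, hX'X (hYX hx), y, hX'X (hYX hy), hne, by
      rw [recolour, if_neg (hYM x hx y hy hne), hxy]⟩

theorem exists_finset_sym2_meets_each_sparsely {V : Type*} [Fintype V] [DecidableEq V] {h m : ℕ}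
    (hL : 130 ≤ log (Fintype.card V)) (hh : 0 < h) (hm : h * log (Fintype.card V) ^ 2 ≤ m) :
    ∃ M : Finset (Sym2 V), ∀ X : Finset V, #X = m →
      (edges X ∩ M).Nonempty ∧
        16 * h * #(edges X ∩ M) < m * m := by
  have hV : (0 : ℝ) < Fintype.card V := by
    by_contra! hV0
    rw [le_antisymm hV0 (Nat.cast_nonneg _), log_zero] at hL
    norm_num at hL
  set L := log (Fintype.card V)
  set z := m * m / (16 * h)
  have hsum : ∑ X ∈ powersetCard m (univ : Finset V),
      (exp (-#(edges X) / Fintype.card (Fin (64 * h))) +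
        exp (2 * #(edges X) / Fintype.card (Fin (64 * h)) - z)) < 1 := by
    calc _ ≤ ∑ X ∈ powersetCard m (univ : Finset V), 2 * exp (-1) * exp (-(m * L)) := by
          refine sum_le_sum fun X hX => ?_
          have hcard : #(edges X) = m.choose 2 := by
            rw [edges, Sym2.card_image_offDiag, (mem_powersetCard.1 hX).2]
          have hz : m * m < 16 * h * (z + 1) := Nat.lt_mul_div_succ _ (by omega)
          rw [hcard, Fintype.card_fin]
          push_cast
          exact exp_neg_add_exp_sub_le hL (by exact_mod_cast hh) hm (Nat.cast_choose_two ℝ m)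
            (by exact_mod_cast hz)
      _ = (Fintype.card V).choose m * (2 * exp (-1) * exp (-(m * L))) := by
          rw [sum_const, card_powersetCard, card_univ, nsmul_eq_mul]
      _ ≤ (Fintype.card V : ℝ) ^ m * (2 * exp (-1) * exp (-(m * L))) := by
          gcongr
          exact_mod_cast Nat.choose_le_pow _ _
      _ = 2 * exp (-1) := by
          rw [← exp_log hV, ← exp_nat_mul, mul_left_comm, ← exp_add]
          simp [L]
      _ < 1 := by linarith [exp_neg_one_lt_half]
  -- A uniformly random `ω : Sym2 V → Fin (64 h)` marks each edge with probability `1 / (64 h)`.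
  let b : Fin (64 * h) := ⟨0, by omega⟩
  obtain ⟨ω, hω⟩ := exists_forall_exists_eq_and_card_filter_eq_lt _ edges b z hsum
  refine ⟨({e | ω e = b} : Finset (Sym2 V)), fun X hX => ?_⟩
  obtain ⟨⟨e, he, hωe⟩, hfew⟩ := hω X (mem_powersetCard.2 ⟨subset_univ X, hX⟩)
  simp only [← filter_mem_eq_inter, mem_filter_univ]
  refine ⟨⟨e, mem_filter.2 ⟨he, hωe⟩⟩, ?_⟩
  calc 16 * h * #{e ∈ edges X | ω e = b}
      < 16 * h * z := Nat.mul_lt_mul_of_pos_left hfew (by omega)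
    _ ≤ m * m := Nat.mul_div_le _ _

theorem stmt15_general (s : ℕ) (ξ : ℝ) (hξ₀ : 0 < ξ) :
    ∃ N : ℕ, ∀ n : ℕ, N ≤ n →
      ∀ c'' : Sym2 (Fin n) → Fin s, ∀ h : ℕ,
        (Real.logb 2 n) ^ (2 / ξ) ≤ (h : ℝ) →
        (∀ X : Finset (Fin n), X.card = h →
          ∀ i : Fin s, ∃ x ∈ X, ∃ y ∈ X, x ≠ y ∧ c'' s(x, y) = i) →
        ∃ c''' : Sym2 (Fin n) → Fin (s + 1),
          (∀ e : Sym2 (Fin n), c''' e = Fin.castSucc (c'' e) ∨ c''' e = Fin.last s) ∧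
          ∀ X : Finset (Fin n), (h : ℝ) ^ (1 + ξ) ≤ (X.card : ℝ) →
            ∀ i : Fin (s + 1), ∃ x ∈ X, ∃ y ∈ X, x ≠ y ∧ c''' s(x, y) = i := by
  refine ⟨⌈exp 130⌉₊, fun n hn c h hlogh hc => ?_⟩
  have hn' : exp 130 ≤ n := Nat.ceil_le.1 hn
  have hL : 130 ≤ log n := (le_log_iff_exp_le (by linarith [exp_pos 130])).2 hn'
  have hlog : log n ^ 2 ≤ (h : ℝ) ^ ξ :=
    log_sq_le_rpow hξ₀ (by linarith [add_one_le_exp 130]) hlogh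
  have hh : 0 < h := by
    refine Nat.pos_of_ne_zero fun h0 => ?_
    rw [h0, Nat.cast_zero, zero_rpow hξ₀.ne'] at hlog
    nlinarith
  set m := ⌈(h : ℝ) ^ (1 + ξ)⌉₊
  have hm : h * log n ^ 2 ≤ m := calc
    h * log n ^ 2 ≤ h * (h : ℝ) ^ ξ := by gcongr
    _ = (h : ℝ) ^ (1 + ξ) := by rw [rpow_add (by exact_mod_cast hh), rpow_one]
    _ ≤ m := Nat.le_ceil _
  have h4m : 4 * h ≤ m := by
    have : (4 : ℝ) ≤ log n ^ 2 := by nlinarith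
    have : (4 * h : ℝ) ≤ m := by nlinarith [mul_le_mul_of_nonneg_left this (Nat.cast_nonneg h)]
    exact_mod_cast this
  obtain ⟨M, hM⟩ :=
    exists_finset_sym2_meets_each_sparsely (V := Fin n) (by simpa using hL) hh (by simpa using hm)
  refine ⟨recolour c M, fun e => ?_,
    fun X hX => exists_recolour_eq c M hc hh h4m hM X (Nat.ceil_le.2 hX)⟩
  unfold recolour
  split_ifs <;> simp

theorem stmt15 (s : ℕ) (hs : 2 ≤ s) (ξ : ℝ) (hξ₀ : 0 < ξ) (hξ₁ : ξ < 1) :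
    ∃ N : ℕ, ∀ n : ℕ, N ≤ n →
      ∀ c'' : Sym2 (Fin n) → Fin s, ∀ h : ℕ,
        (Real.logb 2 n) ^ (2 / ξ) ≤ (h : ℝ) →
        (∀ X : Finset (Fin n), X.card = h →
          ∀ i : Fin s, ∃ x ∈ X, ∃ y ∈ X, x ≠ y ∧ c'' s(x, y) = i) →
        ∃ c''' : Sym2 (Fin n) → Fin (s + 1),
          (∀ e : Sym2 (Fin n), c''' e = Fin.castSucc (c'' e) ∨ c''' e = Fin.last s) ∧
          ∀ X : Finset (Fin n), (h : ℝ) ^ (1 + ξ) ≤ (X.card : ℝ) →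
            ∀ i : Fin (s + 1), ∃ x ∈ X, ∃ y ∈ X, x ≠ y ∧ c''' s(x, y) = i :=
  stmt15_general s ξ hξ₀
end
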